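/- arXiv:1704.01877 — 8 statements merged into one kernel-verified Lean document; each statement's English description precedes it below -/
import Mathlib

section
/- Let (A*, d) be a compact metric space and let F : A* → K(A*) be a continuous multivalued map with compact values such that F(A*) = A* (for the induced operator F(B) = ⋃_{x∈B} F(x)) and such that there exists ε₀ > 0 with d_H(Fⁿ(B), A*) → 0 as n → ∞ for every B ∈ K(A*) with d_H(B, A*) < ε₀. Then A* is an asymptotically stable fixed point of the induced operator F on (K(A*), d_H): for every ε > 0 there exists δ > 0 such that d_H(Fⁿ(B), A*) < ε for all n ∈ ℕ and all B ∈ K(A*) with d_H(B, A*) < δ. -/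
open TopologicalSpace Metric Filter

/-- **Stability lemma on the attractor itself.**
Let `(A*, d)` be a compact metric space (here the whole space `X`, with `A` the
corresponding element of the hyperspace, `(A : Set X) = univ`), and let
`F : A* → K(A*)` be a continuous multivalued map whose induced operator `FK` satisfies
`FK A = A` and attracts every `B` with `d_H(B, A*) < ε₀` for some `ε₀ > 0`.
Then `A` is a stable (hence asymptotically stable) fixed point of `FK`. -/
theorem attractor_stable_on_self
    {X : Type*} [MetricSpace X] [CompactSpace X] [Nonempty X]
    (F : X → NonemptyCompacts X) (hF : Continuous F)
    (FK : NonemptyCompacts X → NonemptyCompacts X) (hFKcont : Continuous FK)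
    (hFK : ∀ B : NonemptyCompacts X, (FK B : Set X) = ⋃ x ∈ (B : Set X), (F x : Set X))
    (A : NonemptyCompacts X) (hA : (A : Set X) = Set.univ) (hfix : FK A = A)
    (hattr : ∃ ε₀ > (0 : ℝ), ∀ B : NonemptyCompacts X, dist B A < ε₀ →
      Tendsto (fun n => dist (FK^[n] B) A) atTop (nhds 0)) :
    ∀ ε > 0, ∃ δ > 0, ∀ B : NonemptyCompacts X, dist B A < δ →
      ∀ n : ℕ, dist (FK^[n] B) A < ε := by
  classical
  obtain ⟨ε₀, hε₀pos, hattr⟩ := hattr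
  -- finiteness of Hausdorff edist between nonempty compacts
  have hfin : ∀ S T : NonemptyCompacts X,
      EMetric.hausdorffEdist (S : Set X) (T : Set X) ≠ ⊤ := fun S T =>
    Metric.hausdorffEdist_ne_top_of_nonempty_of_bounded S.nonempty T.nonempty
      S.isCompact.isBounded T.isCompact.isBounded
  -- infDist to any nonempty compact is bounded by its distance to A
  have hinf : ∀ (x : X) (S : NonemptyCompacts X),
      Metric.infDist x (S : Set X) ≤ dist S A := by
    intro x S
    have hx : x ∈ (A : Set X) := by rw [hA]; trivial
    calc Metric.infDist x (S : Set X)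
        ≤ Metric.hausdorffDist (A : Set X) (S : Set X) :=
          Metric.infDist_le_hausdorffDist_of_mem hx (hfin A S)
      _ = dist S A := by
          rw [Metric.hausdorffDist_comm, ← NonemptyCompacts.dist_eq]
  -- larger sets are closer to A
  have hdistmono : ∀ S T : NonemptyCompacts X, (S : Set X) ⊆ (T : Set X) →
      dist T A ≤ dist S A := by
    intro S T hST
    have hd : (0 : ℝ) ≤ dist S A := dist_nonneg
    rw [NonemptyCompacts.dist_eq]
    refine Metric.hausdorffDist_le_of_mem_dist hd ?_ ?_
    · intro x _
      exact ⟨x, by rw [hA]; trivial, by simpa using hd⟩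
    · intro y _
      obtain ⟨x, hxS, hxd⟩ := S.isCompact.exists_infDist_eq_dist S.nonempty y
      exact ⟨x, hST hxS, by rw [← hxd]; exact hinf y S⟩
  -- monotonicity of iterates of FK with respect to inclusion
  have hmono : ∀ (B C : NonemptyCompacts X), (B : Set X) ⊆ (C : Set X) →
      ∀ n, (FK^[n] B : Set X) ⊆ (FK^[n] C : Set X) := by
    intro B C hBC n
    induction n with
    | zero => exact hBC
    | succ n ih =>
      rw [Function.iterate_succ_apply', Function.iterate_succ_apply', hFK, hFK]
      exact Set.biUnion_subset_biUnion_left ih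
  intro ε hε
  -- Baire category argument
  set O : Set (NonemptyCompacts X) := {B | dist B A < ε₀} with hO
  have hOopen : IsOpen O := isOpen_lt (Continuous.dist continuous_id continuous_const)
    continuous_const
  have hOA : A ∈ O := by simp [hO, dist_self, hε₀pos]
  set E : ℕ → Set (NonemptyCompacts X) := fun N =>
    {B | ∀ n, N ≤ n → dist (FK^[n] B) A ≤ ε / 2} ∪ {B | ε₀ ≤ dist B A} with hE
  have hEclosed : ∀ N, IsClosed (E N) := by
    intro N
    refine IsClosed.union ?_ ?_
    · have heq : {B : NonemptyCompacts X | ∀ n, N ≤ n → dist (FK^[n] B) A ≤ ε / 2}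
          = ⋂ n, {B : NonemptyCompacts X | N ≤ n → dist (FK^[n] B) A ≤ ε / 2} := by
        ext B; simp [Set.mem_iInter]
      rw [heq]
      refine isClosed_iInter fun n => ?_
      by_cases h : N ≤ n
      · have heq2 : {B : NonemptyCompacts X | N ≤ n → dist (FK^[n] B) A ≤ ε / 2}
            = {B : NonemptyCompacts X | dist (FK^[n] B) A ≤ ε / 2} := by
          ext B; simp [h]
        rw [heq2]
        exact isClosed_le (Continuous.dist (hFKcont.iterate n) continuous_const)
          continuous_const
      · have heq2 : {B : NonemptyCompacts X | N ≤ n → dist (FK^[n] B) A ≤ ε / 2}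
            = Set.univ := by
          ext B; simp [h]
        rw [heq2]; exact isClosed_univ
    · exact isClosed_le continuous_const (Continuous.dist continuous_id continuous_const)
  have hcover : ⋃ N, E N = Set.univ := by
    ext B
    simp only [Set.mem_iUnion, Set.mem_univ, iff_true]
    by_cases hB : dist B A < ε₀
    · have hev : ∀ᶠ n in atTop, dist (FK^[n] B) A < ε / 2 :=
        (hattr B hB).eventually (gt_mem_nhds (by linarith))
      obtain ⟨N, hN⟩ := Filter.eventually_atTop.mp hev
      exact ⟨N, Or.inl fun n hn => (hN n hn).le⟩
    · exact ⟨0, Or.inr (not_lt.mp hB)⟩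
  have hdense := dense_iUnion_interior_of_closed hEclosed hcover
  obtain ⟨B₀, hB₀mem, hB₀O⟩ := hdense.exists_mem_open hOopen ⟨A, hOA⟩
  obtain ⟨N, hB₀int⟩ := Set.mem_iUnion.mp hB₀mem
  have hIopen : IsOpen (interior (E N) ∩ O) := isOpen_interior.inter hOopen
  obtain ⟨r, hr, hball⟩ := Metric.isOpen_iff.mp hIopen B₀ ⟨hB₀int, hB₀O⟩
  -- head: finitely many iterates controlled by continuity at A
  have head : ∀ M : ℕ, ∃ δ > 0, ∀ C : NonemptyCompacts X, dist C A < δ →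
      ∀ n < M, dist (FK^[n] C) A < ε := by
    intro M
    induction M with
    | zero => exact ⟨1, one_pos, fun C _ n hn => absurd hn (Nat.not_lt_zero n)⟩
    | succ M ih =>
      obtain ⟨δ₁, hδ₁, h₁⟩ := ih
      have hc : ContinuousAt (FK^[M]) A := (hFKcont.iterate M).continuousAt
      obtain ⟨δ₂, hδ₂, h₂⟩ := Metric.continuousAt_iff.mp hc ε hε
      refine ⟨min δ₁ δ₂, lt_min hδ₁ hδ₂, fun C hC n hn => ?_⟩
      rcases Nat.lt_succ_iff_lt_or_eq.mp hn with h | h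
      · exact h₁ C (hC.trans_le (min_le_left _ _)) n h
      · have := h₂ (show dist C A < δ₂ from hC.trans_le (min_le_right _ _))
        rw [Function.iterate_fixed hfix M] at this
        rw [h]
        exact this
  obtain ⟨δ₁, hδ₁pos, hhead⟩ := head N
  refine ⟨min δ₁ (r / 2), lt_min hδ₁pos (by positivity), fun C hC n => ?_⟩
  by_cases hn : n < N
  · exact hhead C (lt_of_lt_of_le hC (min_le_left _ _)) n hn
  · push_neg at hn
    have hCr : dist C A < r / 2 := lt_of_lt_of_le hC (min_le_right _ _)
    -- the compact subset of C close to B₀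
    set S : Set X := {c ∈ (C : Set X) | Metric.infDist c (B₀ : Set X) ≤ r / 2} with hSdef
    have hSsub : S ⊆ (C : Set X) := fun c hc => hc.1
    have hSclosed : IsClosed S := by
      have : S = (C : Set X) ∩ {c | Metric.infDist c (B₀ : Set X) ≤ r / 2} := by
        ext c; exact Iff.rfl
      rw [this]
      exact C.isCompact.isClosed.inter
        (isClosed_le (Metric.continuous_infDist_pt _) continuous_const)
    have hScompact : IsCompact S := C.isCompact.of_isClosed_subset hSclosed hSsub
    -- for every point of B₀ there is a point of C at distance ≤ r/2, lying in S
    have hkey : ∀ y ∈ (B₀ : Set X), ∃ c ∈ S, dist y c ≤ r / 2 := by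
      intro y hy
      obtain ⟨c, hcC, hcd⟩ := C.isCompact.exists_infDist_eq_dist C.nonempty y
      have hlt : dist y c < r / 2 := by
        rw [← hcd]; exact lt_of_le_of_lt (hinf y C) hCr
      refine ⟨c, ⟨hcC, ?_⟩, hlt.le⟩
      calc Metric.infDist c (B₀ : Set X) ≤ dist c y := Metric.infDist_le_dist_of_mem hy
        _ ≤ r / 2 := by rw [dist_comm]; exact hlt.le
    have hSne : S.Nonempty := by
      obtain ⟨b₀, hb₀⟩ := B₀.nonempty
      obtain ⟨c, hcS, _⟩ := hkey b₀ hb₀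
      exact ⟨c, hcS⟩
    set C' : NonemptyCompacts X := ⟨⟨S, hScompact⟩, hSne⟩ with hC'def
    have hC'B₀ : dist C' B₀ < r := by
      have hle : dist C' B₀ ≤ r / 2 := by
        rw [NonemptyCompacts.dist_eq]
        refine Metric.hausdorffDist_le_of_mem_dist (by positivity) ?_ ?_
        · intro x hx
          obtain ⟨y, hyB₀, hyd⟩ := B₀.isCompact.exists_infDist_eq_dist B₀.nonempty x
          exact ⟨y, hyB₀, by rw [← hyd]; exact hx.2⟩
        · intro y hy
          obtain ⟨c, hcS, hcd⟩ := hkey y hy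
          exact ⟨c, hcS, hcd⟩
      linarith
    have hC'mem := hball (Metric.mem_ball.mpr hC'B₀)
    have hC'EN : C' ∈ E N := interior_subset hC'mem.1
    have hC'O : dist C' A < ε₀ := hC'mem.2
    have htail : ∀ m, N ≤ m → dist (FK^[m] C') A ≤ ε / 2 := by
      rcases hC'EN with h | h
      · exact h
      · exact absurd h (not_le.mpr hC'O)
    calc dist (FK^[n] C) A ≤ dist (FK^[n] C') A := by
          refine hdistmono (FK^[n] C') (FK^[n] C) ?_
          exact hmono C' C hSsub n
      _ ≤ ε / 2 := htail n hn
      _ < ε := by linarith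
end

section
/- Let (X,d) be a metric space and let F : X → K(X) be a continuous multivalued map with compact values, inducing the continuous operator F : K(X) → K(X), F(B) = ⋃_{x∈B} F(x). If A* is a strict attractor of F, i.e. A* ⊆ X is nonempty compact and there exists an open set U ⊆ X with A* ⊆ U such that d_H(Fⁿ(S), A*) → 0 as n → ∞ for every nonempty compact S ⊆ U, then A* is an asymptotically stable fixed point of the operator F in (K(X), d_H): F(A*) = A*, A* attracts a d_H-neighbourhood of itself in K(X), and for every ε > 0 there exists δ > 0 such that d_H(Fⁿ(B), A*) < ε for all n ∈ ℕ and all B ∈ K(X) with d_H(B, A*) < δ. -/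
open TopologicalSpace Metric Filter
open Set

section Helpers

variable {X : Type*} [MetricSpace X]

/-- The singleton as a nonempty compact set. -/
noncomputable def ncSing (x : X) : NonemptyCompacts X :=
  ⟨⟨{x}, isCompact_singleton⟩, Set.singleton_nonempty x⟩

lemma ncSing_coe (x : X) : (ncSing x : Set X) = {x} := rfl

lemma ncSing_edist (x y : X) :
    EMetric.hausdorffEdist ({x} : Set X) {y} = edist x y := by
  apply le_antisymm
  · apply EMetric.hausdorffEdist_le_of_mem_edist
    · intro z hz; simp only [mem_singleton_iff] at hz; subst hz
      exact ⟨y, rfl, le_rfl⟩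
    · intro z hz; simp only [mem_singleton_iff] at hz
      exact ⟨x, rfl, by rw [hz]; exact (edist_comm y x).le⟩
  · calc edist x y = EMetric.infEdist x {y} := (EMetric.infEdist_singleton).symm
      _ ≤ EMetric.hausdorffEdist {x} {y} := EMetric.infEdist_le_hausdorffEdist_of_mem rfl

lemma ncSing_isometry : Isometry (ncSing (X := X)) := by
  intro x y
  show EMetric.hausdorffEdist _ _ = _
  rw [ncSing_coe, ncSing_coe, ncSing_edist]

lemma ncSing_continuous : Continuous (ncSing (X := X)) := ncSing_isometry.continuous

/-- Uniform continuity near a compact set: one point in the compact set, the other nearby. -/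
lemma uc_near_compact {Y : Type*} [MetricSpace Y] (f : X → Y) (hf : Continuous f)
    {K : Set X} (hK : IsCompact K) (hKne : K.Nonempty) {ε : ℝ} (hε : 0 < ε) :
    ∃ δ > 0, ∀ a ∈ K, ∀ x : X, dist x a < δ → dist (f x) (f a) < ε := by
  have hcont : ∀ a : X, ∃ ρ > 0, ∀ x : X, dist x a < ρ → dist (f x) (f a) < ε / 2 := by
    intro a
    exact Metric.continuous_iff.1 hf a (ε / 2) (by positivity)
  choose ρ hρpos hρ using hcont
  have hcov : K ⊆ ⋃ a : K, ball (↑a) (ρ ↑a / 2) := by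
    intro b hb
    exact mem_iUnion.2 ⟨⟨b, hb⟩, by simpa using half_pos (hρpos b)⟩
  obtain ⟨t, ht⟩ := hK.elim_finite_subcover _ (fun a : K => isOpen_ball) hcov
  have htne : t.Nonempty := by
    obtain ⟨b, hb⟩ := hKne
    obtain ⟨a, ha, -⟩ := mem_iUnion₂.1 (ht hb)
    exact ⟨a, ha⟩
  refine ⟨t.inf' htne (fun a => ρ ↑a / 2), ?_, ?_⟩
  · apply (Finset.lt_inf'_iff htne).2
    intro a _
    exact half_pos (hρpos ↑a)
  · intro a ha x hx
    obtain ⟨i, hit, hai⟩ := mem_iUnion₂.1 (ht ha)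
    have h1 : dist a ↑i < ρ ↑i / 2 := by simpa [dist_comm] using hai
    have h2 : dist x ↑i < ρ ↑i := by
      have hle : t.inf' htne (fun a => ρ ↑a / 2) ≤ ρ ↑i / 2 := Finset.inf'_le _ hit
      calc dist x ↑i ≤ dist x a + dist a ↑i := dist_triangle _ _ _
        _ < ρ ↑i / 2 + ρ ↑i / 2 := by
            apply add_lt_add_of_lt_of_lt (lt_of_lt_of_le hx hle) h1
        _ = ρ ↑i := by ring
    have h3 : dist (f x) (f ↑i) < ε / 2 := hρ _ _ h2
    have h4 : dist (f a) (f ↑i) < ε / 2 := hρ _ _ (lt_trans h1 (by linarith [hρpos (↑i : X)]))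
    calc dist (f x) (f a) ≤ dist (f x) (f ↑i) + dist (f ↑i) (f a) := dist_triangle _ _ _
      _ = dist (f x) (f ↑i) + dist (f a) (f ↑i) := by rw [dist_comm (f ↑i) (f a)]
      _ < ε / 2 + ε / 2 := add_lt_add h3 h4
      _ = ε := by ring

/-- A union of a compact set and countably many compact sets inside shrinking
thickenings of it is compact. -/
lemma compact_union_of_shrinking {A : Set X} (hA : IsCompact A) (B : ℕ → Set X)
    (hBc : ∀ k, IsCompact (B k)) (η : ℕ → ℝ) (hη : Tendsto η atTop (nhds 0))
    (hBsub : ∀ k, B k ⊆ thickening (η k) A) : IsCompact (A ∪ ⋃ k, B k) := by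
  apply isCompact_of_finite_subcover
  intro ι Uo hUo hcov
  classical
  obtain ⟨t, ht⟩ := hA.elim_finite_subcover Uo hUo (subset_trans subset_union_left hcov)
  have hopen : IsOpen (⋃ i ∈ t, Uo i) := isOpen_biUnion fun i _ => hUo i
  obtain ⟨η₀, hη₀, hsub⟩ := hA.exists_thickening_subset_open hopen ht
  have hev : ∀ᶠ k in atTop, η k < η₀ := hη.eventually_lt_const hη₀
  obtain ⟨K, hK⟩ := eventually_atTop.1 hev
  have hfin : ∀ k, ∃ tk : Finset ι, B k ⊆ ⋃ i ∈ tk, Uo i := by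
    intro k
    apply (hBc k).elim_finite_subcover Uo hUo
    exact subset_trans (subset_trans (subset_iUnion B k) subset_union_right) hcov
  choose tk htk using hfin
  refine ⟨t ∪ (Finset.range K).biUnion tk, ?_⟩
  rintro x (hx | hx)
  · obtain ⟨i, hit, hxi⟩ := mem_iUnion₂.1 (ht hx)
    exact mem_iUnion₂.2 ⟨i, Finset.mem_union_left _ hit, hxi⟩
  · obtain ⟨k, hk⟩ := mem_iUnion.1 hx
    by_cases hkK : k < K
    · obtain ⟨i, hit, hxi⟩ := mem_iUnion₂.1 (htk k hk)
      refine mem_iUnion₂.2 ⟨i, Finset.mem_union_right _ ?_, hxi⟩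
      exact Finset.mem_biUnion.2 ⟨k, Finset.mem_range.2 hkK, hit⟩
    · have : x ∈ thickening η₀ A := by
        apply thickening_mono (le_of_lt (hK k (le_of_not_gt hkK))) A
        exact hBsub k hk
      obtain ⟨i, hit, hxi⟩ := mem_iUnion₂.1 (hsub this)
      exact mem_iUnion₂.2 ⟨i, Finset.mem_union_left _ hit, hxi⟩

end Helpers

/-- **Stability of strict attractors.**
If `F : X → K(X)` is a continuous multivalued map with compact values on a metric space,
inducing the continuous operator `FK`, and `A` is a strict attractor of `F`
(there is an open `U ⊆ X` with `↑A ⊆ U` such that `FK^[n] S → A` for every nonempty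
compact `S ⊆ U`), then `A` is an asymptotically stable fixed point of `FK` in the
hyperspace: `FK A = A`, `A` attracts a Hausdorff-metric neighbourhood of itself,
and `A` is stable. -/
theorem strict_attractor_asymptotically_stable
    {X : Type*} [MetricSpace X]
    (F : X → NonemptyCompacts X) (hF : Continuous F)
    (FK : NonemptyCompacts X → NonemptyCompacts X) (hFKcont : Continuous FK)
    (hFK : ∀ B : NonemptyCompacts X, (FK B : Set X) = ⋃ x ∈ (B : Set X), (F x : Set X))
    (A : NonemptyCompacts X)
    (U : Set X) (hUopen : IsOpen U) (hAU : (A : Set X) ⊆ U)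
    (hattr : ∀ S : NonemptyCompacts X, (S : Set X) ⊆ U →
      Tendsto (fun n => dist (FK^[n] S) A) atTop (nhds 0)) :
    FK A = A ∧
    (∃ ε > (0 : ℝ), ∀ B : NonemptyCompacts X, dist B A < ε →
      Tendsto (fun n => dist (FK^[n] B) A) atTop (nhds 0)) ∧
    ∀ ε > 0, ∃ δ > 0, ∀ B : NonemptyCompacts X, dist B A < δ →
      ∀ n : ℕ, dist (FK^[n] B) A < ε := by
  classical
  have hfinE : ∀ s t : NonemptyCompacts X, EMetric.hausdorffEdist (s : Set X) (t : Set X) ≠ ⊤ :=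
    fun s t => hausdorffEdist_ne_top_of_nonempty_of_bounded s.nonempty t.nonempty
      s.isCompact.isBounded t.isCompact.isBounded
  have hiterc : ∀ n : ℕ, Continuous (fun B : NonemptyCompacts X => FK^[n] B) :=
    fun n => hFKcont.iterate n
  have hmono : ∀ n : ℕ, ∀ B C : NonemptyCompacts X, (B : Set X) ⊆ (C : Set X) →
      (FK^[n] B : Set X) ⊆ (FK^[n] C : Set X) := by
    intro n
    induction n with
    | zero => intro B C h; simpa using h
    | succ n ih =>
      intro B C h
      rw [Function.iterate_succ_apply, Function.iterate_succ_apply]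
      apply ih
      rw [hFK, hFK]
      exact Set.biUnion_subset_biUnion_left h
  have hsubthick : ∀ (B C : NonemptyCompacts X) (δ : ℝ), dist B C < δ →
      (B : Set X) ⊆ thickening δ (C : Set X) := by
    intro B C δ h x hx
    rw [mem_thickening_iff_infDist_lt C.nonempty]
    calc infDist x (C : Set X) ≤ hausdorffDist (B : Set X) (C : Set X) :=
          infDist_le_hausdorffDist_of_mem hx (hfinE B C)
      _ = dist B C := NonemptyCompacts.dist_eq.symm
      _ < δ := h
  have horbA : Tendsto (fun n => FK^[n] A) atTop (nhds A) := by
    rw [tendsto_iff_dist_tendsto_zero]; exact hattr A hAU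
  have hfix : FK A = A := by
    have h1 : Tendsto (fun n => FK^[n+1] A) atTop (nhds A) :=
      horbA.comp (tendsto_add_atTop_nat 1)
    have h2 : Tendsto (fun n => FK^[n+1] A) atTop (nhds (FK A)) := by
      have heq : (fun n => FK^[n+1] A) = fun n => FK (FK^[n] A) := by
        funext n; rw [Function.iterate_succ_apply']
      rw [heq]
      exact (hFKcont.tendsto A).comp horbA
    exact tendsto_nhds_unique h2 h1
  have hfixn : ∀ n : ℕ, FK^[n] A = A := fun n => Function.iterate_fixed hfix n
  obtain ⟨r, hrpos, hrU⟩ := A.isCompact.exists_thickening_subset_open hUopen hAU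
  have part2 : ∀ B : NonemptyCompacts X, dist B A < r →
      Tendsto (fun n => dist (FK^[n] B) A) atTop (nhds 0) :=
    fun B hB => hattr B ((hsubthick B A r hB).trans hrU)
  have lemF : ∀ γ : ℝ, 0 < γ → ∃ δ > 0, ∀ B : NonemptyCompacts X, dist B A < δ →
      ∀ n : ℕ, ∀ x ∈ (FK^[n] B : Set X), infDist x (A : Set X) < γ := by
    intro γ hγ
    by_contra hcon
    push_neg at hcon
    have hstep : ∀ k : ℕ, ∃ B : NonemptyCompacts X, dist B A < min r (1/(k+1)) ∧
        ∃ n : ℕ, ∃ x ∈ (FK^[n] B : Set X), γ ≤ infDist x (A : Set X) := by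
      intro k
      obtain ⟨B, hB1, hrest⟩ := hcon (min r (1/(k+1))) (lt_min hrpos (by positivity))
      exact ⟨B, hB1, hrest⟩
    choose Bk hBk nk xk hxk1 hxk2 using hstep
    have hBsub : ∀ k : ℕ, (Bk k : Set X) ⊆ thickening (min r (1/(k+1:ℝ))) (A : Set X) :=
      fun k => hsubthick _ _ _ (hBk k)
    have hηlim : Tendsto (fun k : ℕ => min r (1/(k+1:ℝ))) atTop (nhds 0) := by
      apply squeeze_zero (fun k => le_min hrpos.le (by positivity)) (fun k => min_le_right _ _)
      exact tendsto_one_div_add_atTop_nhds_zero_nat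
    have hScompact : IsCompact ((A : Set X) ∪ ⋃ k, (Bk k : Set X)) :=
      compact_union_of_shrinking A.isCompact _ (fun k => (Bk k).isCompact) _ hηlim hBsub
    have hSne : ((A : Set X) ∪ ⋃ k, (Bk k : Set X)).Nonempty :=
      A.nonempty.mono subset_union_left
    set S : NonemptyCompacts X := ⟨⟨(A : Set X) ∪ ⋃ k, (Bk k : Set X), hScompact⟩, hSne⟩ with hSdef
    have hSU : (S : Set X) ⊆ U := by
      rintro x (hx | hx)
      · exact hAU hx
      · obtain ⟨k, hk⟩ := mem_iUnion.1 hx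
        exact hrU (thickening_mono (min_le_left _ _) _ (hBsub k hk))
    have hBkS : ∀ k, (Bk k : Set X) ⊆ (S : Set X) :=
      fun k => (subset_iUnion (fun k => (Bk k : Set X)) k).trans subset_union_right
    obtain ⟨N, hN⟩ := eventually_atTop.1 ((hattr S hSU).eventually_lt_const hγ)
    have hnkN : ∀ k, nk k < N := by
      intro k
      by_contra hge
      push_neg at hge
      have hsub2 : (FK^[nk k] (Bk k) : Set X) ⊆ thickening γ (A : Set X) :=
        (hmono _ _ _ (hBkS k)).trans (hsubthick _ _ _ (hN _ hge))
      have := (mem_thickening_iff_infDist_lt A.nonempty).1 (hsub2 (hxk1 k))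
      exact absurd this (not_lt.2 (hxk2 k))
    let f : ℕ → Fin N := fun k => ⟨nk k, hnkN k⟩
    obtain ⟨m, hm⟩ := Finite.exists_infinite_fiber f
    have hminf : (f ⁻¹' {m} : Set ℕ).Infinite := Set.infinite_coe_iff.1 hm
    let BU : ℕ → NonemptyCompacts X := fun k =>
      ⟨⟨(Bk k : Set X) ∪ (A : Set X), (Bk k).isCompact.union A.isCompact⟩,
        (Bk k).nonempty.mono subset_union_left⟩
    have hBUdist : ∀ k, dist (BU k) A ≤ dist (Bk k) A := by
      intro k
      rw [NonemptyCompacts.dist_eq]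
      apply hausdorffDist_le_of_infDist dist_nonneg
      · rintro x (hx | hx)
        · calc infDist x (A:Set X) ≤ hausdorffDist (Bk k : Set X) (A:Set X) :=
              infDist_le_hausdorffDist_of_mem hx (hfinE _ _)
            _ = dist (Bk k) A := NonemptyCompacts.dist_eq.symm
        · rw [infDist_zero_of_mem hx]; exact dist_nonneg
      · intro x hx
        calc infDist x ((Bk k : Set X) ∪ (A : Set X)) ≤ dist x x :=
            infDist_le_dist_of_mem (Or.inr hx)
          _ = 0 := dist_self x
          _ ≤ dist (Bk k) A := dist_nonneg
    have hBUlim : Tendsto BU atTop (nhds A) := by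
      rw [tendsto_iff_dist_tendsto_zero]
      apply squeeze_zero (fun k => dist_nonneg)
        (fun k => (hBUdist k).trans (((hBk k).le).trans (min_le_right _ _)))
      exact tendsto_one_div_add_atTop_nhds_zero_nat
    have hGm : Tendsto (fun k => FK^[(m : ℕ)] (BU k)) atTop (nhds A) := by
      have h := ((hiterc (m : ℕ)).tendsto A).comp hBUlim
      rwa [hfixn (m : ℕ)] at h
    obtain ⟨K1, hK1⟩ := eventually_atTop.1
      ((tendsto_iff_dist_tendsto_zero.1 hGm).eventually_lt_const hγ)
    obtain ⟨k, hkfib, hkK1⟩ := hminf.exists_gt K1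
    have hfk : f k = m := hkfib
    have hnkm : nk k = (m : ℕ) := congrArg Fin.val hfk
    have hgood : (FK^[nk k] (Bk k) : Set X) ⊆ thickening γ (A : Set X) := by
      rw [hnkm]
      refine (hmono _ _ (BU k) subset_union_left).trans ?_
      exact hsubthick _ _ _ (hK1 k hkK1.le)
    have := (mem_thickening_iff_infDist_lt A.nonempty).1 (hgood (hxk1 k))
    exact absurd this (not_lt.2 (hxk2 k))
  -- ============ PART 3 ============
  have part3 : ∀ ε > 0, ∃ δ > 0, ∀ B : NonemptyCompacts X, dist B A < δ →
      ∀ n : ℕ, dist (FK^[n] B) A < ε := by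
    intro ε hε
    have hσpos : (0:ℝ) < ε/4 := by positivity
    haveI hAsne : Nonempty (A : Set X) := A.nonempty.to_subtype
    haveI : CompleteSpace (A : Set X) := A.isCompact.isComplete.completeSpace_coe
    have hΦcont : ∀ m : ℕ, Continuous (fun x : X => FK^[m] (ncSing x)) :=
      fun m => (hiterc m).comp ncSing_continuous
    -- Baire category on the compact attractor
    have hclosed : ∀ L : ℕ, IsClosed {a : (A : Set X) | ∀ m : ℕ, L ≤ m →
        dist (FK^[m] (ncSing ↑a)) A ≤ ε/4} := by
      intro L
      have hrw : {a : (A : Set X) | ∀ m : ℕ, L ≤ m → dist (FK^[m] (ncSing ↑a)) A ≤ ε/4}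
          = ⋂ m : ℕ, ⋂ (_ : L ≤ m), {a : (A : Set X) | dist (FK^[m] (ncSing ↑a)) A ≤ ε/4} := by
        ext a; simp [Set.mem_iInter, Set.mem_setOf_eq]
      rw [hrw]
      refine isClosed_iInter fun m => isClosed_iInter fun _ => ?_
      have hc : Continuous fun a : (A : Set X) => dist (FK^[m] (ncSing ↑a)) A :=
        Continuous.dist ((hΦcont m).comp continuous_subtype_val) continuous_const
      exact isClosed_le hc continuous_const
    have hcover : ⋃ L : ℕ, {a : (A : Set X) | ∀ m : ℕ, L ≤ m →
        dist (FK^[m] (ncSing ↑a)) A ≤ ε/4} = univ := by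
      apply eq_univ_of_forall
      intro a
      have hsing : ((ncSing (↑a : X)) : Set X) ⊆ U := by
        rw [ncSing_coe]; exact singleton_subset_iff.2 (hAU a.2)
      obtain ⟨L, hL⟩ := eventually_atTop.1 ((hattr (ncSing ↑a) hsing).eventually_le_const hσpos)
      exact mem_iUnion.2 ⟨L, fun m hm => hL m hm⟩
    obtain ⟨L₀, hL₀⟩ := nonempty_interior_of_iUnion_of_closed hclosed hcover
    obtain ⟨c₀, hc₀⟩ := hL₀
    obtain ⟨θ, hθpos, hball⟩ := Metric.isOpen_iff.1 isOpen_interior c₀ hc₀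
    have P1 : ∀ x : X, ∀ hx : x ∈ (A : Set X), dist x ↑c₀ < θ → ∀ m : ℕ, L₀ ≤ m →
        dist (FK^[m] (ncSing x)) A ≤ ε/4 := by
      intro x hx hdx m hm
      have hmem : (⟨x, hx⟩ : (A : Set X)) ∈ ball c₀ θ := by
        rw [mem_ball, Subtype.dist_eq]; exact hdx
      exact (interior_subset (hball hmem)) m hm
    -- the visit lemma
    have hvisit : ∃ (MV : ℕ) (δV : ℝ), 0 < δV ∧ ∀ x : X, infDist x (A : Set X) < δV →
        ∃ s : ℕ, s ≤ MV ∧ infDist (↑c₀ : X) (FK^[s] (ncSing x) : Set X) ≤ θ/4 := by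
      have h1 : ∀ a : (A : Set X), ∃ ma : ℕ, dist (FK^[ma] (ncSing ↑a)) A < θ/8 := by
        intro a
        have hsing : ((ncSing (↑a : X)) : Set X) ⊆ U := by
          rw [ncSing_coe]; exact singleton_subset_iff.2 (hAU a.2)
        obtain ⟨L, hL⟩ := eventually_atTop.1
          ((hattr (ncSing ↑a) hsing).eventually_lt_const (by positivity : (0:ℝ) < θ/8))
        exact ⟨L, hL L le_rfl⟩
      choose ma hma using h1
      have h2 : ∀ a : (A : Set X), ∃ ρ > 0, ∀ x : X, dist x ↑a < ρ →
          dist (FK^[ma a] (ncSing x)) (FK^[ma a] (ncSing ↑a)) < θ/8 :=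
        fun a => Metric.continuous_iff.1 (hΦcont (ma a)) ↑a (θ/8) (by positivity)
      choose ρ hρpos hρ using h2
      have hcov : (A : Set X) ⊆ ⋃ a : (A : Set X), ball (↑a) (ρ a / 2) := by
        intro b hb
        exact mem_iUnion.2 ⟨⟨b, hb⟩, by simpa using half_pos (hρpos ⟨b, hb⟩)⟩
      obtain ⟨t, ht⟩ := A.isCompact.elim_finite_subcover _ (fun a : (A : Set X) => isOpen_ball) hcov
      have htne : t.Nonempty := by
        obtain ⟨b, hb⟩ := A.nonempty
        obtain ⟨a, hat, -⟩ := mem_iUnion₂.1 (ht hb)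
        exact ⟨a, hat⟩
      refine ⟨t.sup ma, t.inf' htne (fun a => ρ a / 2),
        (Finset.lt_inf'_iff htne).2 fun a _ => half_pos (hρpos a), ?_⟩
      intro x hx
      obtain ⟨a1, ha1A, ha1d⟩ := A.isCompact.exists_infDist_eq_dist A.nonempty x
      have hxa1 : dist x a1 < t.inf' htne (fun a => ρ a / 2) := by rw [← ha1d]; exact hx
      obtain ⟨i, hit, haib⟩ := mem_iUnion₂.1 (ht ha1A)
      have ha1i : dist a1 ↑i < ρ i / 2 := by simpa [mem_ball] using haib
      have hxi : dist x ↑i < ρ i := by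
        have hle : t.inf' htne (fun a => ρ a / 2) ≤ ρ i / 2 := Finset.inf'_le _ hit
        calc dist x ↑i ≤ dist x a1 + dist a1 ↑i := dist_triangle _ _ _
          _ < ρ i / 2 + ρ i / 2 := add_lt_add (lt_of_lt_of_le hxa1 hle) ha1i
          _ = ρ i := by ring
      refine ⟨ma i, Finset.le_sup hit, ?_⟩
      have hd1 : infDist (↑c₀ : X) (FK^[ma i] (ncSing ↑i) : Set X) ≤ θ/8 := by
        calc infDist (↑c₀ : X) (FK^[ma i] (ncSing ↑i) : Set X)
            ≤ hausdorffDist (A : Set X) (FK^[ma i] (ncSing ↑i) : Set X) :=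
              infDist_le_hausdorffDist_of_mem c₀.2 (hfinE A _)
          _ = dist (FK^[ma i] (ncSing ↑i)) A := by
              rw [NonemptyCompacts.dist_eq, hausdorffDist_comm]
          _ ≤ θ/8 := (hma i).le
      have hd2 : hausdorffDist (FK^[ma i] (ncSing ↑i) : Set X) (FK^[ma i] (ncSing x) : Set X)
          ≤ θ/8 := by
        have h := (hρ i x hxi).le
        rw [NonemptyCompacts.dist_eq] at h
        rw [hausdorffDist_comm]
        exact h
      calc infDist (↑c₀ : X) (FK^[ma i] (ncSing x) : Set X)
          ≤ infDist (↑c₀ : X) (FK^[ma i] (ncSing ↑i) : Set X)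
            + hausdorffDist (FK^[ma i] (ncSing ↑i) : Set X) (FK^[ma i] (ncSing x) : Set X) :=
            infDist_le_infDist_add_hausdorffDist (hfinE _ _)
        _ ≤ θ/8 + θ/8 := add_le_add hd1 hd2
        _ = θ/4 := by ring
    obtain ⟨MV, δV, hδVpos, hVisit⟩ := hvisit
    -- uniform continuity for the window of iterates
    have hρWex : ∃ ρW > 0, ∀ m : ℕ, m ≤ L₀ + MV → ∀ a ∈ (A : Set X), ∀ x : X,
        dist x a < ρW → dist (FK^[m] (ncSing x)) (FK^[m] (ncSing a)) < ε/4 := by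
      have huc : ∀ m : ℕ, ∃ δ > 0, ∀ a ∈ (A : Set X), ∀ x : X, dist x a < δ →
          dist (FK^[m] (ncSing x)) (FK^[m] (ncSing a)) < ε/4 :=
        fun m => uc_near_compact _ (hΦcont m) A.isCompact A.nonempty hσpos
      choose δuc hδucpos hδuc using huc
      refine ⟨(Finset.range (L₀ + MV + 1)).inf' ⟨0, by simp⟩ δuc,
        (Finset.lt_inf'_iff _).2 fun i _ => hδucpos i, ?_⟩
      intro m hm a ha x hx
      apply hδuc m a ha x
      exact lt_of_lt_of_le hx (Finset.inf'_le _ (Finset.mem_range.2 (by omega)))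
    obtain ⟨ρW, hρWpos, hρWuc⟩ := hρWex
    -- the constant γ
    obtain ⟨γ, hγpos, hγρ, hγθ, hγV, hγε⟩ :
        ∃ γ : ℝ, 0 < γ ∧ γ ≤ ρW/2 ∧ γ ≤ θ/8 ∧ γ ≤ δV ∧ γ ≤ ε/2 := by
      refine ⟨min (min (ρW/2) (θ/8)) (min δV (ε/2)), ?_, ?_, ?_, ?_, ?_⟩
      · exact lt_min (lt_min (by positivity) (by positivity)) (lt_min hδVpos (by positivity))
      · exact (min_le_left _ _).trans (min_le_left _ _)
      · exact (min_le_left _ _).trans (min_le_right _ _)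
      · exact (min_le_right _ _).trans (min_le_left _ _)
      · exact (min_le_right _ _).trans (min_le_right _ _)
    obtain ⟨δF, hδFpos, hδF⟩ := lemF γ hγpos
    -- small-time continuity
    have hδCex : ∃ δC > 0, ∀ n : ℕ, n ≤ L₀ + MV → ∀ B : NonemptyCompacts X,
        dist B A < δC → dist (FK^[n] B) A < ε := by
      have hsm : ∀ n : ℕ, ∃ δ > 0, ∀ B : NonemptyCompacts X, dist B A < δ →
          dist (FK^[n] B) A < ε := by
        intro n
        obtain ⟨δ', hδ'pos, hδ'⟩ := Metric.continuous_iff.1 (hiterc n) A ε hε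
        refine ⟨δ', hδ'pos, fun B hB => ?_⟩
        have h := hδ' B hB
        rwa [hfixn n] at h
      choose δC hδCpos hδC using hsm
      refine ⟨(Finset.range (L₀ + MV + 1)).inf' ⟨0, by simp⟩ δC,
        (Finset.lt_inf'_iff _).2 fun i _ => hδCpos i, ?_⟩
      intro n hn B hB
      apply hδC n B
      exact lt_of_lt_of_le hB (Finset.inf'_le _ (Finset.mem_range.2 (by omega)))
    obtain ⟨δC, hδCpos, hδC⟩ := hδCex
    refine ⟨min δF δC, lt_min hδFpos hδCpos, ?_⟩
    intro B hB n
    by_cases hn : n < L₀ + MV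
    · exact hδC n (by omega) B (lt_of_lt_of_le hB (min_le_right _ _))
    push_neg at hn
    -- main case : n ≥ L₀ + MV
    have hforward : ∀ j : ℕ, ∀ x ∈ (FK^[j] B : Set X), infDist x (A : Set X) < γ :=
      fun j => hδF B (lt_of_lt_of_le hB (min_le_left _ _)) j
    obtain ⟨b, hb⟩ := (FK^[n - (L₀ + MV)] B).nonempty
    have hbA : infDist b (A : Set X) < δV :=
      lt_of_lt_of_le (hforward _ b hb) hγV
    obtain ⟨s, hsMV, hsvis⟩ := hVisit b hbA
    have hyex : ∃ y ∈ (FK^[s] (ncSing b) : Set X), dist (↑c₀ : X) y < θ/3 :=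
      (infDist_lt_iff (FK^[s] (ncSing b)).nonempty).1 (lt_of_le_of_lt hsvis (by linarith))
    obtain ⟨y, hy, hyc⟩ := hyex
    have hyB : y ∈ (FK^[s + (n - (L₀ + MV))] B : Set X) := by
      have hsub : (FK^[s] (ncSing b) : Set X) ⊆ (FK^[s] (FK^[n - (L₀ + MV)] B) : Set X) :=
        hmono s _ _ (by rw [ncSing_coe]; exact singleton_subset_iff.2 hb)
      have heq : FK^[s] (FK^[n - (L₀ + MV)] B) = FK^[s + (n - (L₀ + MV))] B :=
        (Function.iterate_add_apply FK s (n - (L₀ + MV)) B).symm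
      rw [← heq]
      exact hsub hy
    have hyA : infDist y (A : Set X) < γ := hforward _ y hyB
    obtain ⟨a1, ha1A, ha1d⟩ := A.isCompact.exists_infDist_eq_dist A.nonempty y
    have hya1 : dist y a1 < γ := by rw [← ha1d]; exact hyA
    have ha1c : dist a1 ↑c₀ < θ := by
      calc dist a1 ↑c₀ ≤ dist a1 y + dist y ↑c₀ := dist_triangle _ _ _
        _ < γ + θ/3 := by
            apply add_lt_add
            · rw [dist_comm]; exact hya1
            · rw [dist_comm]; exact hyc
        _ ≤ θ/8 + θ/3 := by linarith
        _ < θ := by linarith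
    have hmL₀ : L₀ ≤ L₀ + (MV - s) := Nat.le_add_right _ _
    have hmle : L₀ + (MV - s) ≤ L₀ + MV := by omega
    have hmsum : L₀ + (MV - s) + (s + (n - (L₀ + MV))) = n := by omega
    have hUC : dist (FK^[L₀ + (MV - s)] (ncSing y)) (FK^[L₀ + (MV - s)] (ncSing a1)) < ε/4 := by
      apply hρWuc _ hmle a1 ha1A y
      calc dist y a1 < γ := hya1
        _ ≤ ρW/2 := hγρ
        _ ≤ ρW := by linarith
    have hP1 : dist (FK^[L₀ + (MV - s)] (ncSing a1)) A ≤ ε/4 := P1 a1 ha1A ha1c _ hmL₀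
    have hback : ∀ p ∈ (A : Set X), infDist p (FK^[n] B : Set X) ≤ ε/2 := by
      intro p hp
      have hsub : (FK^[L₀ + (MV - s)] (ncSing y) : Set X) ⊆ (FK^[n] B : Set X) := by
        have h1 : (FK^[L₀ + (MV - s)] (ncSing y) : Set X)
            ⊆ (FK^[L₀ + (MV - s)] (FK^[s + (n - (L₀ + MV))] B) : Set X) :=
          hmono _ _ _ (by rw [ncSing_coe]; exact singleton_subset_iff.2 hyB)
        have heq : FK^[L₀ + (MV - s)] (FK^[s + (n - (L₀ + MV))] B) = FK^[n] B := by
          rw [← Function.iterate_add_apply, hmsum]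
        rwa [heq] at h1
      have h3 : infDist p (FK^[n] B : Set X) ≤ infDist p (FK^[L₀ + (MV - s)] (ncSing y) : Set X) :=
        infDist_le_infDist_of_subset hsub (FK^[L₀ + (MV - s)] (ncSing y)).nonempty
      have h4 : infDist p (FK^[L₀ + (MV - s)] (ncSing y) : Set X)
          ≤ infDist p (FK^[L₀ + (MV - s)] (ncSing a1) : Set X)
            + hausdorffDist (FK^[L₀ + (MV - s)] (ncSing a1) : Set X)
              (FK^[L₀ + (MV - s)] (ncSing y) : Set X) :=
        infDist_le_infDist_add_hausdorffDist (hfinE _ _)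
      have h5 : infDist p (FK^[L₀ + (MV - s)] (ncSing a1) : Set X) ≤ ε/4 := by
        calc infDist p (FK^[L₀ + (MV - s)] (ncSing a1) : Set X)
            ≤ hausdorffDist (A : Set X) (FK^[L₀ + (MV - s)] (ncSing a1) : Set X) :=
              infDist_le_hausdorffDist_of_mem hp (hfinE A _)
          _ = dist (FK^[L₀ + (MV - s)] (ncSing a1)) A := by
              rw [NonemptyCompacts.dist_eq, hausdorffDist_comm]
          _ ≤ ε/4 := hP1
      have h6 : hausdorffDist (FK^[L₀ + (MV - s)] (ncSing a1) : Set X)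
          (FK^[L₀ + (MV - s)] (ncSing y) : Set X) ≤ ε/4 := by
        have h := hUC.le
        rw [NonemptyCompacts.dist_eq] at h
        rw [hausdorffDist_comm]
        exact h
      linarith
    have hfwd : ∀ q ∈ (FK^[n] B : Set X), infDist q (A : Set X) ≤ ε/2 := by
      intro q hq
      have h := hforward n q hq
      linarith
    have hfinal : dist (FK^[n] B) A ≤ ε/2 := by
      rw [NonemptyCompacts.dist_eq]
      exact hausdorffDist_le_of_infDist (by positivity) hfwd hback
    linarith
  exact ⟨hfix, ⟨r, hrpos, part2⟩, part3⟩
end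

section
/- Let (X,d) be a locally compact, complete metric space and let f : X → X be a continuous map with a fixed point x* ∈ X such that x* is attractive (d(fⁿ(x), x*) → 0 as n → ∞ for every x ∈ X) and stable (for every ε > 0 there exists δ > 0 such that d(fⁿ(x), x*) < ε for all n ∈ ℕ and all x ∈ X with d(x, x*) < δ). Then there exists a metric d' on X inducing the same topology as d such that f is a contraction with respect to d': for some c ∈ [0,1), d'(f(x), f(y)) ≤ c·d'(x,y) for all x, y ∈ X. -/
/-!
Stability and attraction make the orbits of any compact set enter every ball around `x` after a
uniform time. This yields a continuous `ψ ≥ 0` with `ψ ∘ f ≤ ψ / 4` that is small only near `x`: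
a weighted sum over scales `r` of the orbit sums `∑ₙ 4ⁿ min 1 (d(fⁿz, x) - r)⁺`, which are locally
finite sums. Let `ψ̃` be the largest `1`-Lipschitz minorant of `ψ` and
`ρ(a, b) = min (d(a, b)) (ψ̃ a + ψ̃ b)`, a pseudometric. The new metric is
`D(a, b) = supₙ 2ⁿ ρ(fⁿa, fⁿb)`: it satisfies `D(fa, fb) ≤ D(a, b) / 2` by construction, it
dominates `ρ`, so `D`-small implies `d`-small, and it is continuous for `d` because its terms
beyond `n` are at most `2⁻ⁿ (ψ a + ψ b)`.
-/

open Filter Metric Set Topology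

section

variable {X : Type*}

structure IsLyapunov [PseudoMetricSpace X] (f : X → X) (x : X) (ψ : X → ℝ) : Prop where
  continuous : Continuous ψ
  nonneg : ∀ z, 0 ≤ ψ z
  apply_le : ∀ z, ψ (f z) ≤ ψ z / 4
  dist_lt_of_lt : ∀ ε > 0, ∃ η > 0, ∀ z, ψ z < η → dist z x < ε

section OrbitSum

variable {f : X → X} {g : X → ℝ} {z : X} {M : ℕ}

noncomputable def orbitSum (f : X → X) (g : X → ℝ) (z : X) : ℝ := ∑' n : ℕ, 4 ^ n * g (f^[n] z)

theorem orbitSum_eq_sum (h : ∀ n ≥ M, g (f^[n] z) = 0) :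
    orbitSum f g z = ∑ n ∈ Finset.range M, 4 ^ n * g (f^[n] z) :=
  tsum_eq_sum fun n hn => by rw [h n (by simpa using hn), mul_zero]

theorem orbitSum_nonneg (hg : ∀ z, 0 ≤ g z) : 0 ≤ orbitSum f g z :=
  tsum_nonneg fun _ => mul_nonneg (by positivity) (hg _)

theorem orbitSum_eq_add (h : ∀ n ≥ M, g (f^[n] z) = 0) :
    orbitSum f g z = g z + 4 * orbitSum f g (f z) := by
  have h' : ∀ n ≥ M, g (f^[n] (f z)) = 0 := fun n hn => by
    rw [← Function.iterate_succ_apply]; exact h _ (by omega)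
  rw [orbitSum_eq_sum (M := M + 1) fun n hn => h n (by omega), orbitSum_eq_sum h',
    Finset.sum_range_succ', Finset.mul_sum, add_comm]
  simp [pow_succ, Function.iterate_succ_apply, mul_comm, mul_left_comm]

theorem orbitSum_apply_le (hg : ∀ z, 0 ≤ g z) (h : ∀ n ≥ M, g (f^[n] z) = 0) :
    orbitSum f g (f z) ≤ orbitSum f g z / 4 := by
  rw [orbitSum_eq_add h]; linarith [hg z]

theorem le_orbitSum (hg : ∀ z, 0 ≤ g z) (h : ∀ n ≥ M, g (f^[n] z) = 0) :
    g z ≤ orbitSum f g z := by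
  rw [orbitSum_eq_add h]; linarith [orbitSum_nonneg (f := f) (z := f z) hg]

theorem orbitSum_le_pow (hg : ∀ z, g z ≤ 1) (h : ∀ n ≥ M, g (f^[n] z) = 0) :
    orbitSum f g z ≤ 4 ^ M := by
  have hgeom : ∑ n ∈ Finset.range M, (4 : ℝ) ^ n = (4 ^ M - 1) / 3 := by
    rw [geom_sum_eq (by norm_num)]; norm_num
  rw [orbitSum_eq_sum h]
  calc ∑ n ∈ Finset.range M, 4 ^ n * g (f^[n] z) ≤ ∑ n ∈ Finset.range M, (4 : ℝ) ^ n :=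
        Finset.sum_le_sum fun n _ => mul_le_of_le_one_right (by positivity) (hg _)
    _ ≤ 4 ^ M := by rw [hgeom]; linarith [one_le_pow₀ (n := M) (by norm_num : (1:ℝ) ≤ 4)]

theorem continuousAt_orbitSum [TopologicalSpace X] (hf : Continuous f) (hg : Continuous g)
    {V : Set X} (hV : V ∈ 𝓝 z) (h : ∀ w ∈ V, ∀ n ≥ M, g (f^[n] w) = 0) :
    ContinuousAt (orbitSum f g) z := by
  have hsum : Continuous fun w => ∑ n ∈ Finset.range M, 4 ^ n * g (f^[n] w) :=
    continuous_finsetSum _ fun n _ => continuous_const.mul (hg.comp (hf.iterate n))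
  exact hsum.continuousAt.congr (eventually_of_mem hV fun w hw => (orbitSum_eq_sum (h w hw)).symm)

end OrbitSum

section Attraction

variable [PseudoMetricSpace X] {f : X → X} {x : X}

theorem exists_iterate_mapsTo_ball (hf : Continuous f)
    (hattr : ∀ z : X, Tendsto (fun n => dist (f^[n] z) x) atTop (𝓝 0))
    (hstab : ∀ ε > 0, ∃ δ > 0, ∀ z : X, dist z x < δ → ∀ n : ℕ, dist (f^[n] z) x < ε)
    {K : Set X} (hK : IsCompact K) {ε : ℝ} (hε : 0 < ε) :
    ∃ N, ∀ n ≥ N, MapsTo f^[n] K (ball x ε) := by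
  obtain ⟨δ, hδ, hδε⟩ := hstab ε hε
  have hcover : K ⊆ ⋃ m, {z | dist (f^[m] z) x < δ} := fun z _ =>
    mem_iUnion.2 ((hattr z).eventually (gt_mem_nhds hδ)).exists
  obtain ⟨t, ht⟩ := hK.elim_finite_subcover _
    (fun m => isOpen_lt ((hf.iterate m).dist continuous_const) continuous_const) hcover
  refine ⟨t.sup id, fun n hn z hz => ?_⟩
  obtain ⟨m, hmt, hzm⟩ := mem_iUnion₂.1 (ht hz)
  have hmn : m ≤ n := (Finset.le_sup (f := id) hmt).trans hn
  rw [mem_ball, ← Nat.sub_add_cancel hmn, Function.iterate_add_apply]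
  exact hδε _ hzm _

theorem exists_entrance_times [LocallyCompactSpace X] {ι : Type*} (hf : Continuous f)
    (hattr : ∀ z : X, Tendsto (fun n => dist (f^[n] z) x) atTop (𝓝 0))
    (hstab : ∀ ε > 0, ∃ δ > 0, ∀ z : X, dist z x < δ → ∀ n : ℕ, dist (f^[n] z) x < ε)
    {r : ι → ℝ} (hr : ∀ i, 0 < r i) :
    ∃ N : ι → ℕ, ∀ z, ∃ V ∈ 𝓝 z, ∃ M, ∀ i, ∀ n ≥ M + N i, MapsTo f^[n] V (ball x (r i)) := by
  obtain ⟨K, hK, hKx⟩ := exists_compact_mem_nhds x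
  obtain ⟨R, hR, hRK⟩ := Metric.mem_nhds_iff.1 hKx
  choose N hN using fun i => exists_iterate_mapsTo_ball hf hattr hstab hK (hr i)
  refine ⟨N, fun z => ?_⟩
  obtain ⟨V, hV, hVz⟩ := exists_compact_mem_nhds z
  obtain ⟨M, hM⟩ := exists_iterate_mapsTo_ball hf hattr hstab hV hR
  refine ⟨V, hVz, M, fun i n hn => ?_⟩
  rw [← Nat.sub_add_cancel (show M ≤ n by omega), Function.iterate_add]
  exact (hN i _ (by omega)).comp ((hM M le_rfl).mono_right hRK)

end Attraction

section Excess

variable [PseudoMetricSpace X] {f : X → X} {x z : X} {r ε : ℝ}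

def excess (x : X) (r : ℝ) (z : X) : ℝ := min 1 (max (dist z x - r) 0)

theorem excess_nonneg : 0 ≤ excess x r z := le_min zero_le_one (le_max_right _ _)

theorem excess_le_one : excess x r z ≤ 1 := min_le_left _ _

theorem continuous_excess : Continuous (excess x r) :=
  continuous_const.min (((continuous_id.dist continuous_const).sub continuous_const).max
    continuous_const)

theorem excess_eq_zero (hz : z ∈ ball x r) : excess x r z = 0 := by
  rw [mem_ball] at hz
  simp [excess, max_eq_right (by linarith : dist z x - r ≤ 0)]

theorem min_le_excess (hz : ε ≤ dist z x) : min 1 (ε - r) ≤ excess x r z :=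
  min_le_min le_rfl (le_max_of_le_left (by linarith))

theorem exists_excess_iterate_eq_zero
    (hattr : Tendsto (fun n => dist (f^[n] z) x) atTop (𝓝 0)) (hr : 0 < r) :
    ∃ M, ∀ n ≥ M, excess x r (f^[n] z) = 0 :=
  eventually_atTop.1 <| (hattr.eventually (gt_mem_nhds hr)).mono fun _ hn =>
    excess_eq_zero (mem_ball.2 hn)

theorem orbitSum_excess_apply_le
    (hattr : Tendsto (fun n => dist (f^[n] z) x) atTop (𝓝 0)) (hr : 0 < r) :
    orbitSum f (excess x r) (f z) ≤ orbitSum f (excess x r) z / 4 :=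
  let ⟨_, hM⟩ := exists_excess_iterate_eq_zero hattr hr
  orbitSum_apply_le (fun _ => excess_nonneg) hM

theorem min_le_orbitSum_excess
    (hattr : Tendsto (fun n => dist (f^[n] z) x) atTop (𝓝 0)) (hr : 0 < r)
    (hz : ε ≤ dist z x) : min 1 (ε - r) ≤ orbitSum f (excess x r) z :=
  let ⟨_, hM⟩ := exists_excess_iterate_eq_zero hattr hr
  (min_le_excess hz).trans (le_orbitSum (fun _ => excess_nonneg) hM)

theorem orbitSum_excess_le_pow {V : Set X} {M : ℕ} (hM : ∀ n ≥ M, MapsTo f^[n] V (ball x r))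
    (hz : z ∈ V) : orbitSum f (excess x r) z ≤ 4 ^ M :=
  orbitSum_le_pow (fun _ => excess_le_one) fun n hn => excess_eq_zero (hM n hn hz)

theorem continuousAt_orbitSum_excess (hf : Continuous f) {V : Set X} {M : ℕ} (hV : V ∈ 𝓝 z)
    (hM : ∀ n ≥ M, MapsTo f^[n] V (ball x r)) : ContinuousAt (orbitSum f (excess x r)) z :=
  continuousAt_orbitSum hf continuous_excess hV fun _ hw n hn => excess_eq_zero (hM n hn hw)

end Excess

theorem continuous_tsum_of_locally_le {ι F : Type*} [TopologicalSpace X]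
    [NormedAddCommGroup F] [CompleteSpace F] {g : ι → X → F} {u : ι → ℝ}
    (hg : ∀ i, Continuous (g i)) (hu : Summable u)
    (hloc : ∀ z, ∃ V ∈ 𝓝 z, ∃ C, ∀ i, ∀ w ∈ V, ‖g i w‖ ≤ C * u i) :
    Continuous fun w => ∑' i, g i w :=
  continuous_iff_continuousAt.2 fun z => by
    obtain ⟨V, hV, C, hC⟩ := hloc z
    exact (continuousOn_tsum (fun i => (hg i).continuousOn) (hu.mul_left C)
      fun i w hw => hC i w hw).continuousAt hV

section Lyapunov

variable [PseudoMetricSpace X] {f : X → X} {x : X}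

theorem isLyapunov_tsum {L : ℕ → X → ℝ} {u : ℕ → ℝ} (hu : Summable u)
    (hcont : ∀ k, Continuous (L k)) (hnonneg : ∀ k z, 0 ≤ L k z)
    (hdecay : ∀ k z, L k (f z) ≤ L k z / 4)
    (hloc : ∀ z, ∃ V ∈ 𝓝 z, ∃ C, ∀ k, ∀ w ∈ V, L k w ≤ C * u k)
    (hsmall : ∀ ε > 0, ∃ k, ∃ η > 0, ∀ z, L k z < η → dist z x < ε) :
    IsLyapunov f x fun z => ∑' k, L k z := by
  have hloc' : ∀ z, ∃ V ∈ 𝓝 z, ∃ C, ∀ k, ∀ w ∈ V, ‖L k w‖ ≤ C * u k := fun z => by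
    obtain ⟨V, hV, C, hC⟩ := hloc z
    exact ⟨V, hV, C, fun k w hw => (Real.norm_of_nonneg (hnonneg k w)).trans_le (hC k w hw)⟩
  have hsum : ∀ z, Summable fun k => L k z := fun z => by
    obtain ⟨V, hV, C, hC⟩ := hloc z
    exact (hu.mul_left C).of_nonneg_of_le (fun k => hnonneg k z)
      fun k => hC k z (mem_of_mem_nhds hV)
  refine ⟨continuous_tsum_of_locally_le hcont hu hloc', fun z => tsum_nonneg fun k => hnonneg k z,
    fun z => ?_, fun ε hε => ?_⟩
  · rw [← tsum_div_const]
    exact (hsum (f z)).tsum_le_tsum (hdecay · z) ((hsum z).div_const 4)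
  · obtain ⟨k, η, hη, hk⟩ := hsmall ε hε
    exact ⟨η, hη, fun z hz => hk z <| lt_of_le_of_lt
      ((hsum z).le_tsum k fun j _ => hnonneg j z) hz⟩

theorem exists_isLyapunov [LocallyCompactSpace X] (hf : Continuous f)
    (hattr : ∀ z : X, Tendsto (fun n => dist (f^[n] z) x) atTop (𝓝 0))
    (hstab : ∀ ε > 0, ∃ δ > 0, ∀ z : X, dist z x < δ → ∀ n : ℕ, dist (f^[n] z) x < ε) :
    ∃ ψ, IsLyapunov f x ψ := by
  set r : ℕ → ℝ := fun k => 1 / (k + 1)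
  have hr : ∀ k, 0 < r k := fun k => Nat.one_div_pos_of_nat
  obtain ⟨N, hN⟩ := exists_entrance_times hf hattr hstab hr
  -- near any point the `k`-th orbit sum is at most `4 ^ (M + N k)`, with `M` independent of `k`
  set c : ℕ → ℝ := fun k => 2⁻¹ ^ k / 4 ^ N k
  have hc : ∀ k, 0 ≤ c k := fun k => by positivity
  refine ⟨_, isLyapunov_tsum (L := fun k z => c k * orbitSum f (excess x (r k)) z)
    (summable_geometric_of_lt_one (r := (2 : ℝ)⁻¹) (by norm_num) (by norm_num))
    (fun k => ?_) (fun k z => ?_) (fun k z => ?_) (fun z => ?_) (fun ε hε => ?_)⟩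
  · refine continuous_const.mul (continuous_iff_continuousAt.2 fun z => ?_)
    obtain ⟨V, hV, M, hM⟩ := hN z
    exact continuousAt_orbitSum_excess hf hV (hM k)
  · exact mul_nonneg (hc k) (orbitSum_nonneg fun _ => excess_nonneg)
  · rw [mul_div_assoc]
    exact mul_le_mul_of_nonneg_left (orbitSum_excess_apply_le (hattr z) (hr k)) (hc k)
  · obtain ⟨V, hV, M, hM⟩ := hN z
    refine ⟨V, hV, 4 ^ M, fun k w hw => ?_⟩
    calc c k * orbitSum f (excess x (r k)) w ≤ c k * 4 ^ (M + N k) :=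
          mul_le_mul_of_nonneg_left (orbitSum_excess_le_pow (hM k) hw) (hc k)
      _ = 4 ^ M * 2⁻¹ ^ k := by simp only [c, pow_add]; field_simp
  · obtain ⟨k, hk⟩ := exists_nat_one_div_lt hε
    refine ⟨k, c k * min 1 (ε - r k), by positivity, fun z hz => ?_⟩
    by_contra! hzx
    have := mul_le_mul_of_nonneg_left
      (min_le_orbitSum_excess (f := f) (hattr z) (hr k) hzx) (hc k)
    linarith

end Lyapunov

section LipMinorant

variable [PseudoMetricSpace X] {ψ : X → ℝ} {a : X} {η : ℝ}

/-- The largest `1`-Lipschitz function below `ψ`. -/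
noncomputable def lipMinorant (ψ : X → ℝ) (a : X) : ℝ := ⨅ u, dist a u + ψ u

theorem lipMinorant_le_dist_add (hψ : ∀ z, 0 ≤ ψ z) (a u : X) :
    lipMinorant ψ a ≤ dist a u + ψ u :=
  ciInf_le ⟨0, forall_mem_range.2 fun v => add_nonneg dist_nonneg (hψ v)⟩ u

theorem lipMinorant_nonneg (hψ : ∀ z, 0 ≤ ψ z) (a : X) : 0 ≤ lipMinorant ψ a :=
  have : Nonempty X := ⟨a⟩
  le_ciInf fun u => add_nonneg dist_nonneg (hψ u)

theorem lipMinorant_le (hψ : ∀ z, 0 ≤ ψ z) (a : X) : lipMinorant ψ a ≤ ψ a := by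
  simpa using lipMinorant_le_dist_add hψ a a

theorem lipschitzWith_lipMinorant (hψ : ∀ z, 0 ≤ ψ z) : LipschitzWith 1 (lipMinorant ψ) :=
  LipschitzWith.of_le_add fun a b => by
    have : Nonempty X := ⟨a⟩
    rw [← sub_le_iff_le_add]
    exact le_ciInf fun u => by
      linarith [lipMinorant_le_dist_add hψ a u, dist_triangle a b u]

theorem exists_dist_add_lt_of_lipMinorant_lt (h : lipMinorant ψ a < η) :
    ∃ u, dist a u + ψ u < η :=
  have : Nonempty X := ⟨a⟩
  exists_lt_of_ciInf_lt h

end LipMinorant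

section ShortcutDist

variable [PseudoMetricSpace X] {g : X → ℝ}

/-- The distance with a free shortcut through the zero set of `g`. -/
def shortcutDist (g : X → ℝ) (a b : X) : ℝ := min (dist a b) (g a + g b)

theorem shortcutDist_le_dist (a b : X) : shortcutDist g a b ≤ dist a b := min_le_left _ _

theorem shortcutDist_le_add (a b : X) : shortcutDist g a b ≤ g a + g b := min_le_right _ _

theorem shortcutDist_nonneg (hg : ∀ z, 0 ≤ g z) (a b : X) : 0 ≤ shortcutDist g a b :=
  le_min dist_nonneg (add_nonneg (hg a) (hg b))

theorem shortcutDist_self (hg : ∀ z, 0 ≤ g z) (a : X) : shortcutDist g a a = 0 :=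
  le_antisymm ((shortcutDist_le_dist a a).trans_eq (dist_self a)) (shortcutDist_nonneg hg a a)

theorem shortcutDist_comm (a b : X) : shortcutDist g a b = shortcutDist g b a := by
  rw [shortcutDist, dist_comm, add_comm, shortcutDist]

theorem shortcutDist_triangle (hg0 : ∀ z, 0 ≤ g z) (hg : LipschitzWith 1 g) (a b c : X) :
    shortcutDist g a c ≤ shortcutDist g a b + shortcutDist g b c := by
  have hab := (abs_sub_le_iff.1 (hg.dist_le_mul a b)).1
  have hbc := (abs_sub_le_iff.1 (hg.dist_le_mul b c)).2
  simp only [NNReal.coe_one, one_mul] at hab hbc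
  have hac := shortcutDist_le_dist (g := g) a c
  have hac' := shortcutDist_le_add (g := g) a c
  rcases min_cases (dist a b) (g a + g b) with ⟨h₁, -⟩ | ⟨h₁, -⟩ <;>
  rcases min_cases (dist b c) (g b + g c) with ⟨h₂, -⟩ | ⟨h₂, -⟩ <;>
  simp only [shortcutDist, h₁, h₂] at hac hac' ⊢ <;>
  linarith [dist_triangle a b c, hg0 b]

theorem dist_lt_of_shortcutDist_lt {x : X} (hg0 : ∀ z, 0 ≤ g z)
    (hg : ∀ ε > 0, ∃ η > 0, ∀ z, g z < η → dist z x < ε) {ε : ℝ} (hε : 0 < ε) :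
    ∃ η > 0, ∀ a b, shortcutDist g a b < η → dist a b < ε := by
  obtain ⟨η, hη, hηx⟩ := hg (ε / 2) (half_pos hε)
  refine ⟨min η ε, lt_min hη hε, fun a b hab => ?_⟩
  rcases min_lt_iff.1 hab with h | h
  · exact h.trans_le (min_le_right _ _)
  · have hsum := h.trans_le (min_le_left _ _)
    have hax := hηx a (by linarith [hg0 b])
    have hbx := hηx b (by linarith [hg0 a])
    linarith [dist_triangle_right a b x]

end ShortcutDist

section OrbitSupDist

variable {f : X → X} {ρ : X → X → ℝ}

noncomputable def orbitSupDist (f : X → X) (ρ : X → X → ℝ) (a b : X) : ℝ :=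
  ⨆ n : ℕ, 2 ^ n * ρ (f^[n] a) (f^[n] b)

theorem pow_mul_le_orbitSupDist
    (hbdd : ∀ a b, BddAbove (range fun n : ℕ => 2 ^ n * ρ (f^[n] a) (f^[n] b)))
    (a b : X) (n : ℕ) : 2 ^ n * ρ (f^[n] a) (f^[n] b) ≤ orbitSupDist f ρ a b :=
  le_ciSup (hbdd a b) n

theorem le_orbitSupDist
    (hbdd : ∀ a b, BddAbove (range fun n : ℕ => 2 ^ n * ρ (f^[n] a) (f^[n] b))) (a b : X) :
    ρ a b ≤ orbitSupDist f ρ a b := by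
  simpa using pow_mul_le_orbitSupDist hbdd a b 0

theorem orbitSupDist_self (hρ : ∀ a, ρ a a = 0) (a : X) : orbitSupDist f ρ a a = 0 := by
  simp [orbitSupDist, hρ]

theorem orbitSupDist_comm (hρ : ∀ a b, ρ a b = ρ b a) (a b : X) :
    orbitSupDist f ρ a b = orbitSupDist f ρ b a := by
  simp only [orbitSupDist, hρ (f^[_] a)]

theorem orbitSupDist_triangle (hρ : ∀ a b c, ρ a c ≤ ρ a b + ρ b c)
    (hbdd : ∀ a b, BddAbove (range fun n : ℕ => 2 ^ n * ρ (f^[n] a) (f^[n] b))) (a b c : X) :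
    orbitSupDist f ρ a c ≤ orbitSupDist f ρ a b + orbitSupDist f ρ b c :=
  ciSup_le fun n => by
    have := mul_le_mul_of_nonneg_left (hρ (f^[n] a) (f^[n] b) (f^[n] c))
      (by positivity : (0 : ℝ) ≤ 2 ^ n)
    linarith [pow_mul_le_orbitSupDist hbdd a b n, pow_mul_le_orbitSupDist hbdd b c n]

theorem orbitSupDist_apply_le
    (hbdd : ∀ a b, BddAbove (range fun n : ℕ => 2 ^ n * ρ (f^[n] a) (f^[n] b))) (a b : X) :
    orbitSupDist f ρ (f a) (f b) ≤ 2⁻¹ * orbitSupDist f ρ a b :=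
  ciSup_le fun n => by
    have := pow_mul_le_orbitSupDist hbdd a b (n + 1)
    simp only [pow_succ, Function.iterate_succ_apply] at this
    linarith

end OrbitSupDist

theorem isOpen_iff_of_tendsto_of_dist_lt [PseudoMetricSpace X] {D : X → X → ℝ}
    (hD : ∀ a, Tendsto (D a) (𝓝 a) (𝓝 0))
    (hdist : ∀ a, ∀ ε > 0, ∃ η > 0, ∀ b, D a b < η → dist a b < ε) (s : Set X) :
    IsOpen s ↔ ∀ a ∈ s, ∃ ε > 0, ∀ b, D a b < ε → b ∈ s := by
  refine ⟨fun hs a ha => ?_, fun h => isOpen_iff_mem_nhds.2 fun a ha => ?_⟩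
  · obtain ⟨ε, hε, hball⟩ := Metric.isOpen_iff.1 hs a ha
    obtain ⟨η, hη, hηε⟩ := hdist a ε hε
    exact ⟨η, hη, fun b hb => hball (mem_ball'.2 (hηε b hb))⟩
  · obtain ⟨ε, hε, hεs⟩ := h a ha
    exact mem_of_superset ((hD a).eventually (gt_mem_nhds hε)) hεs

section LyapunovDist

variable [PseudoMetricSpace X] {f : X → X} {x : X} {ψ : X → ℝ}

noncomputable def lyapunovDist (f : X → X) (ψ : X → ℝ) : X → X → ℝ :=
  orbitSupDist f (shortcutDist (lipMinorant ψ))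

theorem IsLyapunov.iterate_le (hψ : IsLyapunov f x ψ) (n : ℕ) (z : X) :
    ψ (f^[n] z) ≤ 4⁻¹ ^ n * ψ z := by
  induction n with
  | zero => simp
  | succ n ih =>
    rw [Function.iterate_succ_apply', pow_succ]
    linarith [hψ.apply_le (f^[n] z)]

theorem IsLyapunov.dist_lt_of_lipMinorant_lt (hψ : IsLyapunov f x ψ) {ε : ℝ} (hε : 0 < ε) :
    ∃ η > 0, ∀ z, lipMinorant ψ z < η → dist z x < ε := by
  obtain ⟨η, hη, hηx⟩ := hψ.dist_lt_of_lt (ε / 2) (half_pos hε)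
  refine ⟨min η (ε / 2), lt_min hη (half_pos hε), fun z hz => ?_⟩
  obtain ⟨u, hu⟩ := exists_dist_add_lt_of_lipMinorant_lt hz
  have hux := hηx u (by linarith [min_le_left η (ε / 2), dist_nonneg (x := z) (y := u)])
  linarith [dist_triangle z u x, min_le_right η (ε / 2), hψ.nonneg u]

theorem IsLyapunov.pow_mul_shortcutDist_le (hψ : IsLyapunov f x ψ) (a b : X) (n : ℕ) :
    2 ^ n * shortcutDist (lipMinorant ψ) (f^[n] a) (f^[n] b) ≤ 2⁻¹ ^ n * (ψ a + ψ b) := by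
  have hle : shortcutDist (lipMinorant ψ) (f^[n] a) (f^[n] b) ≤ 4⁻¹ ^ n * (ψ a + ψ b) := by
    linarith [shortcutDist_le_add (g := lipMinorant ψ) (f^[n] a) (f^[n] b),
      lipMinorant_le hψ.nonneg (f^[n] a), lipMinorant_le hψ.nonneg (f^[n] b),
      hψ.iterate_le n a, hψ.iterate_le n b]
  calc 2 ^ n * shortcutDist (lipMinorant ψ) (f^[n] a) (f^[n] b)
      ≤ 2 ^ n * (4⁻¹ ^ n * (ψ a + ψ b)) := mul_le_mul_of_nonneg_left hle (by positivity)
    _ = 2⁻¹ ^ n * (ψ a + ψ b) := by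
      rw [← mul_assoc, ← mul_pow]; norm_num

theorem IsLyapunov.bddAbove (hψ : IsLyapunov f x ψ) (a b : X) :
    BddAbove (range fun n : ℕ => 2 ^ n * shortcutDist (lipMinorant ψ) (f^[n] a) (f^[n] b)) :=
  ⟨ψ a + ψ b, forall_mem_range.2 fun n => (hψ.pow_mul_shortcutDist_le a b n).trans <|
    mul_le_of_le_one_left (add_nonneg (hψ.nonneg a) (hψ.nonneg b))
      (pow_le_one₀ (by norm_num) (by norm_num))⟩

theorem IsLyapunov.lyapunovDist_triangle (hψ : IsLyapunov f x ψ) (a b c : X) :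
    lyapunovDist f ψ a c ≤ lyapunovDist f ψ a b + lyapunovDist f ψ b c :=
  orbitSupDist_triangle (shortcutDist_triangle (lipMinorant_nonneg hψ.nonneg)
    (lipschitzWith_lipMinorant hψ.nonneg)) hψ.bddAbove a b c

theorem IsLyapunov.lyapunovDist_apply_le (hψ : IsLyapunov f x ψ) (a b : X) :
    lyapunovDist f ψ (f a) (f b) ≤ 2⁻¹ * lyapunovDist f ψ a b :=
  orbitSupDist_apply_le hψ.bddAbove a b

theorem IsLyapunov.dist_lt_of_lyapunovDist_lt (hψ : IsLyapunov f x ψ) (a : X) {ε : ℝ}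
    (hε : 0 < ε) : ∃ η > 0, ∀ b, lyapunovDist f ψ a b < η → dist a b < ε := by
  obtain ⟨η, hη, hηε⟩ := dist_lt_of_shortcutDist_lt (lipMinorant_nonneg hψ.nonneg)
    (fun _ => hψ.dist_lt_of_lipMinorant_lt) hε
  exact ⟨η, hη, fun b hb => hηε a b ((le_orbitSupDist hψ.bddAbove a b).trans_lt hb)⟩

theorem IsLyapunov.lyapunovDist_le (hψ : IsLyapunov f x ψ) (a b : X) (N : ℕ) :
    lyapunovDist f ψ a b ≤
      ∑ n ∈ Finset.range N, 2 ^ n * dist (f^[n] a) (f^[n] b) + 2⁻¹ ^ N * (ψ a + ψ b) := by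
  refine ciSup_le fun n => ?_
  have hψab := add_nonneg (hψ.nonneg a) (hψ.nonneg b)
  rcases lt_or_ge n N with hn | hn
  · calc 2 ^ n * shortcutDist (lipMinorant ψ) (f^[n] a) (f^[n] b)
        ≤ 2 ^ n * dist (f^[n] a) (f^[n] b) :=
          mul_le_mul_of_nonneg_left (shortcutDist_le_dist _ _) (by positivity)
      _ ≤ ∑ n ∈ Finset.range N, 2 ^ n * dist (f^[n] a) (f^[n] b) :=
          Finset.single_le_sum (f := fun n => 2 ^ n * dist (f^[n] a) (f^[n] b))
            (fun _ _ => by positivity) (Finset.mem_range.2 hn)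
      _ ≤ _ := le_add_of_nonneg_right (by positivity)
  · calc 2 ^ n * shortcutDist (lipMinorant ψ) (f^[n] a) (f^[n] b)
        ≤ 2⁻¹ ^ n * (ψ a + ψ b) := hψ.pow_mul_shortcutDist_le a b n
      _ ≤ 2⁻¹ ^ N * (ψ a + ψ b) :=
          mul_le_mul_of_nonneg_right (pow_le_pow_of_le_one (by norm_num) (by norm_num) hn) hψab
      _ ≤ _ := le_add_of_nonneg_left (Finset.sum_nonneg fun _ _ => by positivity)

theorem IsLyapunov.tendsto_lyapunovDist (hψ : IsLyapunov f x ψ) (hf : Continuous f) (a : X) :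
    Tendsto (lyapunovDist f ψ a) (𝓝 a) (𝓝 0) := by
  have hnonneg : ∀ b, 0 ≤ lyapunovDist f ψ a b := fun b =>
    (shortcutDist_nonneg (lipMinorant_nonneg hψ.nonneg) a b).trans
      (le_orbitSupDist hψ.bddAbove a b)
  refine tendsto_order.2 ⟨fun ε hε => Eventually.of_forall fun b => hε.trans_le (hnonneg b),
    fun ε hε => ?_⟩
  obtain ⟨N, hN⟩ : ∃ N : ℕ, 2⁻¹ ^ N * (ψ a + ψ a) < ε :=
    (((tendsto_pow_atTop_nhds_zero_of_lt_one (r := (2 : ℝ)⁻¹) (by norm_num) (by norm_num)).mul_const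
      (ψ a + ψ a)).eventually (gt_mem_nhds (by simpa using hε))).exists
  have hB : Continuous fun b =>
      ∑ n ∈ Finset.range N, 2 ^ n * dist (f^[n] a) (f^[n] b) + 2⁻¹ ^ N * (ψ a + ψ b) :=
    (continuous_finsetSum _ fun n _ => continuous_const.mul
      (continuous_const.dist (hf.iterate n))).add
      (continuous_const.mul (continuous_const.add hψ.continuous))
  filter_upwards [(hB.tendsto a).eventually (gt_mem_nhds (by simpa using hN))] with b hb
  exact (hψ.lyapunovDist_le a b N).trans_lt hb

end LyapunovDist

theorem IsLyapunov.eq_of_lyapunovDist_eq_zero [MetricSpace X] {f : X → X} {x : X} {ψ : X → ℝ}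
    (hψ : IsLyapunov f x ψ) {a b : X} (h : lyapunovDist f ψ a b = 0) : a = b :=
  eq_of_forall_dist_le fun _ hε =>
    let ⟨_, hη, hab⟩ := hψ.dist_lt_of_lyapunovDist_lt a hε
    (hab b (h ▸ hη)).le

end

theorem exists_equivalent_metric_contraction_general
    {X : Type*} [m₀ : MetricSpace X] [LocallyCompactSpace X]
    (f : X → X) (hf : Continuous f) (x : X)
    (hattr : ∀ z : X, Tendsto (fun n => dist (f^[n] z) x) atTop (nhds 0))
    (hstab : ∀ ε > 0, ∃ δ > 0, ∀ z : X, dist z x < δ → ∀ n : ℕ, dist (f^[n] z) x < ε) :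
    ∃ m : MetricSpace X,
      m.toUniformSpace.toTopologicalSpace = m₀.toUniformSpace.toTopologicalSpace ∧
      ∃ c : ℝ, 0 ≤ c ∧ c < 1 ∧
        ∀ a b : X, @dist X m.toDist (f a) (f b) ≤ c * @dist X m.toDist a b := by
  obtain ⟨ψ, hψ⟩ := exists_isLyapunov hf hattr hstab
  have hψ₀ := lipMinorant_nonneg hψ.nonneg
  refine ⟨.ofDistTopology (lyapunovDist f ψ) (orbitSupDist_self (shortcutDist_self hψ₀))
    (orbitSupDist_comm shortcutDist_comm) hψ.lyapunovDist_triangle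
    (isOpen_iff_of_tendsto_of_dist_lt (hψ.tendsto_lyapunovDist hf)
      fun a _ => hψ.dist_lt_of_lyapunovDist_lt a)
    fun _ _ => hψ.eq_of_lyapunovDist_eq_zero, rfl, 2⁻¹, by norm_num, by norm_num,
    hψ.lyapunovDist_apply_le⟩

/-- **A converse of the Banach contraction theorem (Jánoš/Opoitsev-type).**
On a locally compact complete metric space, a continuous map with an attractive and
stable fixed point is a contraction with respect to some metric inducing the same
topology. -/
theorem exists_equivalent_metric_contraction
    {X : Type*} [m₀ : MetricSpace X] [LocallyCompactSpace X] [CompleteSpace X]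
    (f : X → X) (hf : Continuous f) (x : X) (hfix : f x = x)
    (hattr : ∀ z : X, Tendsto (fun n => dist (f^[n] z) x) atTop (nhds 0))
    (hstab : ∀ ε > 0, ∃ δ > 0, ∀ z : X, dist z x < δ → ∀ n : ℕ, dist (f^[n] z) x < ε) :
    ∃ m : MetricSpace X,
      m.toUniformSpace.toTopologicalSpace = m₀.toUniformSpace.toTopologicalSpace ∧
      ∃ c : ℝ, 0 ≤ c ∧ c < 1 ∧
        ∀ a b : X, @dist X m.toDist (f a) (f b) ≤ c * @dist X m.toDist a b :=
  exists_equivalent_metric_contraction_general (m₀ := m₀) f hf x hattr hstab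
end

section
/- Let (X,d) be a locally compact, complete metric space and let F : X → K(X) be a continuous multivalued map with compact values whose induced operator F : K(X) → K(X), F(B) = ⋃_{x∈B} F(x), has an attractor A* with basin of attraction U ⊆ K(X): F(A*) = A*, U is open in (K(X), d_H), A* ∈ U, and d_H(Fⁿ(B), A*) → 0 for all B ∈ U. Then there exists a metric D on U inducing the same topology as the restriction of d_H to U such that the operator F restricted to U is a contraction with respect to D: for some c ∈ [0,1), D(F(B), F(B')) ≤ c·D(B, B') for all B, B' ∈ U. -/
/-!
The operator `FK` is monotone for inclusion, and this makes the attractor `A` Lyapunov stable.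
Otherwise a compactness argument on backward orbits gives compact subsets of `A`, arbitrarily close
to `A`, whose images are far from `A` at arbitrarily late times; by monotonicity and uniform
continuity this persists for every compact subset of `A` inside a small thickening of such a set,
and a nested choice of these sets yields one compact subset of `A` close to `A` whose orbit is far
from `A` infinitely often, contradicting attraction.

Stability and local compactness make the attraction uniform on a ball around `A`: there are times
`T k` after which all orbits from the ball stay within `1 / (k + 1)` of `A`. With `ρ_k` the metric
`(k + 1) d_H`, truncated at `1` and with the `1 / (k + 1)`-ball about `A` collapsed,
`D(B, C) = sup_{k, n} 4^(-k) 2^(-T k) 2^n ρ_k(FK^n B, FK^n C)` is finite on the basin, induces its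
topology, and satisfies `D(FK B, FK C) ≤ D(B, C) / 2`.
-/

open TopologicalSpace Metric Filter

open Set Topology

section CollapsedDist

variable {Y : Type*} [PseudoMetricSpace Y] (a : Y) (k : ℕ)

noncomputable def radialExcess (x : Y) : ℝ := max 0 ((k + 1) * dist x a - 1)

/-- The metric `(k + 1) * dist` with the closed ball of radius `1 / (k + 1)` about `a` collapsed
to a point, truncated at `1`. -/
noncomputable def collapsedDist (x y : Y) : ℝ :=
  min 1 (min ((k + 1) * dist x y) (radialExcess a k x + radialExcess a k y))

theorem radialExcess_nonneg (x : Y) : 0 ≤ radialExcess a k x := le_max_left _ _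

theorem radialExcess_le_add (x y : Y) :
    radialExcess a k x ≤ radialExcess a k y + (k + 1) * dist x y := by
  have hy : (k + 1) * dist y a - 1 ≤ radialExcess a k y := le_max_right _ _
  have hxy : (k + 1 : ℝ) * dist x a ≤ (k + 1) * dist x y + (k + 1) * dist y a := by
    rw [← mul_add]
    gcongr
    exact dist_triangle x y a
  exact max_le (add_nonneg (radialExcess_nonneg a k y) (by positivity)) (by linarith)

theorem radialExcess_eq_zero {x : Y} (hx : dist x a ≤ 1 / (k + 1)) : radialExcess a k x = 0 := by
  rw [le_div_iff₀' (by positivity)] at hx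
  exact max_eq_left (by linarith)

theorem collapsedDist_nonneg (x y : Y) : 0 ≤ collapsedDist a k x y :=
  le_min zero_le_one <| le_min (by positivity) <|
    add_nonneg (radialExcess_nonneg a k x) (radialExcess_nonneg a k y)

theorem collapsedDist_le_one (x y : Y) : collapsedDist a k x y ≤ 1 := min_le_left _ _

theorem collapsedDist_le_mul_dist (x y : Y) : collapsedDist a k x y ≤ (k + 1) * dist x y :=
  (min_le_right _ _).trans (min_le_left _ _)

theorem collapsedDist_comm (x y : Y) : collapsedDist a k x y = collapsedDist a k y x := by
  rw [collapsedDist, collapsedDist, dist_comm, add_comm (radialExcess a k x)]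

theorem collapsedDist_self (x : Y) : collapsedDist a k x x = 0 :=
  le_antisymm ((collapsedDist_le_mul_dist a k x x).trans_eq (by simp))
    (collapsedDist_nonneg a k x x)

theorem collapsedDist_triangle (x y z : Y) :
    collapsedDist a k x z ≤ collapsedDist a k x y + collapsedDist a k y z := by
  -- `radialExcess` is `(k + 1)`-Lipschitz, which makes the inner minimum a pseudometric
  have hx := radialExcess_le_add a k x y
  have hz := radialExcess_le_add a k z y
  rw [dist_comm z y] at hz
  have hd : (k + 1 : ℝ) * dist x z ≤ (k + 1) * dist x y + (k + 1) * dist y z := by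
    rw [← mul_add]
    gcongr
    exact dist_triangle x y z
  have := radialExcess_nonneg a k x
  have := radialExcess_nonneg a k y
  have := radialExcess_nonneg a k z
  have : (0 : ℝ) ≤ (k + 1) * dist x y := by positivity
  have : (0 : ℝ) ≤ (k + 1) * dist y z := by positivity
  simp only [collapsedDist, min_def]
  split_ifs <;> linarith

theorem collapsedDist_eq_zero {x y : Y} (hx : dist x a ≤ 1 / (k + 1))
    (hy : dist y a ≤ 1 / (k + 1)) : collapsedDist a k x y = 0 := by
  have : (0 : ℝ) ≤ (k + 1) * dist x y := by positivity
  rw [collapsedDist, radialExcess_eq_zero a k hx, radialExcess_eq_zero a k hy, add_zero,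
    min_eq_right this, min_eq_right zero_le_one]

theorem collapsedDist_eq_one {x y : Y} (h : 3 ≤ (k + 1) * dist x y) :
    collapsedDist a k x y = 1 := by
  have hx : (k + 1) * dist x a - 1 ≤ radialExcess a k x := le_max_right _ _
  have hy : (k + 1) * dist y a - 1 ≤ radialExcess a k y := le_max_right _ _
  have hxy : (k + 1 : ℝ) * dist x y ≤ (k + 1) * dist x a + (k + 1) * dist y a := by
    rw [← mul_add, dist_comm y a]
    gcongr
    exact dist_triangle x a y
  exact min_eq_left (le_min (by linarith) (by linarith))

end CollapsedDist

section ContractingDist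

variable {Y : Type*} [MetricSpace Y] (f : Y → Y) (a : Y) (r : ℝ) (T : ℕ → ℕ)

def IsUniformAttractionTime : Prop :=
  ∀ k n, T k ≤ n → MapsTo f^[n] (ball a r) (closedBall a (1 / (k + 1)))

noncomputable def contractingWeight (k : ℕ) : ℝ := (1 / 4) ^ k * (1 / 2) ^ T k

noncomputable def contractingTerm (x y : Y) (p : ℕ × ℕ) : ℝ :=
  contractingWeight T p.1 * 2 ^ p.2 * collapsedDist a p.1 (f^[p.2] x) (f^[p.2] y)

/-- When `T k` is a time after which the orbits of a neighbourhood of `a` stay within `1 / (k + 1)`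
of `a`, the weight `2 ^ (- T k)` keeps the supremum finite, while the factor `2 ^ n` in front of the
`n`-th iterate makes `f` a `1 / 2`-contraction. -/
noncomputable def contractingDist (x y : Y) : ℝ := ⨆ p : ℕ × ℕ, contractingTerm f a T x y p

variable {f a r T}

theorem contractingWeight_pos (k : ℕ) : 0 < contractingWeight T k := by
  unfold contractingWeight; positivity

theorem contractingWeight_le_one (k : ℕ) : contractingWeight T k ≤ 1 :=
  mul_le_one₀ (pow_le_one₀ (by norm_num) (by norm_num)) (by positivity)
    (pow_le_one₀ (by norm_num) (by norm_num))

theorem contractingTerm_comm (x y : Y) (p : ℕ × ℕ) :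
    contractingTerm f a T x y p = contractingTerm f a T y x p := by
  rw [contractingTerm, contractingTerm, collapsedDist_comm]

theorem contractingTerm_triangle (x y z : Y) (p : ℕ × ℕ) :
    contractingTerm f a T x z p ≤ contractingTerm f a T x y p + contractingTerm f a T y z p := by
  rw [contractingTerm, contractingTerm, contractingTerm, ← mul_add]
  exact mul_le_mul_of_nonneg_left (collapsedDist_triangle _ _ _ _ _)
    (mul_nonneg (contractingWeight_pos p.1).le (by positivity))

theorem contractingTerm_map (x y : Y) (k n : ℕ) :
    contractingTerm f a T (f x) (f y) (k, n) = 1 / 2 * contractingTerm f a T x y (k, n + 1) := by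
  simp only [contractingTerm, ← Function.iterate_succ_apply, pow_succ]
  ring

theorem contractingTerm_eq_zero (hT : IsUniformAttractionTime f a r T) {x y : Y} {N k n : ℕ}
    (hx : f^[N] x ∈ ball a r) (hy : f^[N] y ∈ ball a r) (hn : N + T k ≤ n) :
    contractingTerm f a T x y (k, n) = 0 := by
  have hiter : f^[n] = f^[n - N] ∘ f^[N] := by
    rw [← Function.iterate_add, Nat.sub_add_cancel (by omega)]
  have hsub : T k ≤ n - N := by omega
  rw [contractingTerm, hiter, Function.comp_apply, Function.comp_apply,
    collapsedDist_eq_zero a k (hT k _ hsub hx) (hT k _ hsub hy), mul_zero]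

theorem contractingTerm_le_pow (hT : IsUniformAttractionTime f a r T) {x y : Y} {N : ℕ}
    (hx : f^[N] x ∈ ball a r) (hy : f^[N] y ∈ ball a r) (p : ℕ × ℕ) :
    contractingTerm f a T x y p ≤ (1 / 4) ^ p.1 * 2 ^ N := by
  obtain ⟨k, n⟩ := p
  rcases le_or_gt (N + T k) n with hn | hn
  · rw [contractingTerm_eq_zero hT hx hy hn]
    positivity
  have hw := (contractingWeight_pos (T := T) k).le
  have h2 : (1 / 2 : ℝ) ^ T k * 2 ^ T k = 1 := by rw [← mul_pow]; norm_num
  calc contractingTerm f a T x y (k, n)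
      ≤ contractingWeight T k * 2 ^ (N + T k) * 1 := by
        refine mul_le_mul (mul_le_mul_of_nonneg_left ?_ hw)
          (collapsedDist_le_one _ _ _ _) (collapsedDist_nonneg _ _ _ _) (by positivity)
        exact pow_le_pow_right₀ one_le_two hn.le
    _ = (1 / 4) ^ k * 2 ^ N := by
        rw [contractingWeight, pow_add]
        linear_combination ((1 / 4 : ℝ) ^ k * 2 ^ N) * h2

theorem exists_iterate_mem_ball_of_tendsto {x y : Y} (hr : 0 < r)
    (hx : Tendsto (f^[·] x) atTop (𝓝 a)) (hy : Tendsto (f^[·] y) atTop (𝓝 a)) :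
    ∃ N, f^[N] x ∈ ball a r ∧ f^[N] y ∈ ball a r :=
  ((hx.eventually (ball_mem_nhds a hr)).and (hy.eventually (ball_mem_nhds a hr))).exists

theorem bddAbove_range_contractingTerm (hT : IsUniformAttractionTime f a r T) (hr : 0 < r)
    {x y : Y} (hx : Tendsto (f^[·] x) atTop (𝓝 a)) (hy : Tendsto (f^[·] y) atTop (𝓝 a)) :
    BddAbove (range (contractingTerm f a T x y)) := by
  obtain ⟨N, hNx, hNy⟩ := exists_iterate_mem_ball_of_tendsto hr hx hy
  refine ⟨2 ^ N, forall_mem_range.2 fun p => (contractingTerm_le_pow hT hNx hNy p).trans ?_⟩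
  exact mul_le_of_le_one_left (by positivity) (pow_le_one₀ (by norm_num) (by norm_num))

theorem contractingTerm_le_contractingDist (hT : IsUniformAttractionTime f a r T) (hr : 0 < r)
    {x y : Y} (hx : Tendsto (f^[·] x) atTop (𝓝 a)) (hy : Tendsto (f^[·] y) atTop (𝓝 a))
    (p : ℕ × ℕ) : contractingTerm f a T x y p ≤ contractingDist f a T x y :=
  le_ciSup (bddAbove_range_contractingTerm hT hr hx hy) p

theorem contractingDist_self (x : Y) : contractingDist f a T x x = 0 := by
  simp [contractingDist, contractingTerm, collapsedDist_self]

theorem contractingDist_comm (x y : Y) : contractingDist f a T x y = contractingDist f a T y x := by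
  simp only [contractingDist, contractingTerm_comm x y]

theorem contractingDist_triangle (hT : IsUniformAttractionTime f a r T) (hr : 0 < r) {x y z : Y}
    (hx : Tendsto (f^[·] x) atTop (𝓝 a)) (hy : Tendsto (f^[·] y) atTop (𝓝 a))
    (hz : Tendsto (f^[·] z) atTop (𝓝 a)) :
    contractingDist f a T x z ≤ contractingDist f a T x y + contractingDist f a T y z :=
  ciSup_le fun p => (contractingTerm_triangle x y z p).trans <|
    add_le_add (contractingTerm_le_contractingDist hT hr hx hy p)
      (contractingTerm_le_contractingDist hT hr hy hz p)

theorem contractingDist_map_le (hT : IsUniformAttractionTime f a r T) (hr : 0 < r) {x y : Y}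
    (hx : Tendsto (f^[·] x) atTop (𝓝 a)) (hy : Tendsto (f^[·] y) atTop (𝓝 a)) :
    contractingDist f a T (f x) (f y) ≤ 1 / 2 * contractingDist f a T x y :=
  ciSup_le fun ⟨k, n⟩ => by
    rw [contractingTerm_map]
    gcongr
    exact contractingTerm_le_contractingDist hT hr hx hy (k, n + 1)

theorem contractingWeight_le_contractingDist (hT : IsUniformAttractionTime f a r T) (hr : 0 < r)
    {x y : Y} (hx : Tendsto (f^[·] x) atTop (𝓝 a)) (hy : Tendsto (f^[·] y) atTop (𝓝 a))
    {k : ℕ} (h : 3 ≤ (k + 1) * dist x y) :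
    contractingWeight T k ≤ contractingDist f a T x y := by
  have := contractingTerm_le_contractingDist hT hr hx hy (k, 0)
  rwa [contractingTerm, Function.iterate_zero_apply, Function.iterate_zero_apply,
    collapsedDist_eq_one a k h, pow_zero, mul_one, mul_one] at this

theorem exists_nat_three_le_mul {d : ℝ} (hd : 0 < d) : ∃ k : ℕ, 3 ≤ (k + 1) * d := by
  obtain ⟨k, hk⟩ := exists_nat_gt (3 / d)
  refine ⟨k, ?_⟩
  rw [div_lt_iff₀ hd] at hk
  nlinarith

theorem contractingDist_eq_zero_iff (hT : IsUniformAttractionTime f a r T) (hr : 0 < r) {x y : Y}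
    (hx : Tendsto (f^[·] x) atTop (𝓝 a)) (hy : Tendsto (f^[·] y) atTop (𝓝 a)) :
    contractingDist f a T x y = 0 ↔ x = y := by
  refine ⟨fun h => by_contra fun hxy => ?_, fun h => h ▸ contractingDist_self x⟩
  obtain ⟨k, hk⟩ := exists_nat_three_le_mul (dist_pos.2 hxy)
  have := contractingWeight_le_contractingDist hT hr hx hy hk
  linarith [contractingWeight_pos (T := T) k]

theorem exists_contractingDist_lt_imp_dist_lt (hT : IsUniformAttractionTime f a r T) (hr : 0 < r)
    {x : Y} (hx : Tendsto (f^[·] x) atTop (𝓝 a)) {δ : ℝ} (hδ : 0 < δ) :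
    ∃ ε > 0, ∀ y, Tendsto (f^[·] y) atTop (𝓝 a) →
      contractingDist f a T x y < ε → dist x y < δ := by
  obtain ⟨k, hk⟩ := exists_nat_three_le_mul hδ
  refine ⟨contractingWeight T k, contractingWeight_pos k,
    fun y hy hD => not_le.1 fun hδy => ?_⟩
  have := contractingWeight_le_contractingDist hT hr hx hy
    (hk.trans (mul_le_mul_of_nonneg_left hδy (by positivity)))
  linarith

theorem eventually_contractingDist_lt (hf : Continuous f) (hT : IsUniformAttractionTime f a r T)
    (hr : 0 < r) {x : Y} (hx : Tendsto (f^[·] x) atTop (𝓝 a)) {ε : ℝ} (hε : 0 < ε) :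
    ∀ᶠ y in 𝓝 x, contractingDist f a T x y < ε := by
  obtain ⟨N, hN⟩ := (hx.eventually (ball_mem_nhds a hr)).exists
  obtain ⟨K, hK⟩ : ∃ K : ℕ, (1 / 4 : ℝ) ^ K * 2 ^ N < ε / 2 := by
    have h := (tendsto_pow_atTop_nhds_zero_of_lt_one (r := (1 / 4 : ℝ)) (by norm_num)
      (by norm_num)).mul_const (2 ^ N)
    rw [zero_mul] at h
    exact (h.eventually_lt_const (half_pos hε)).exists
  -- the terms with `k < K` vanish from time `L` on, so only finitely many of them matter
  set L := N + (Finset.range K).sup T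
  set γ := ε / 2 / (2 ^ L * K + 1)
  have hγ : 0 < γ := by positivity
  have hγL : 1 * 2 ^ L * (K * γ) = ε / 2 - γ := by
    rw [show ε / 2 = γ * (2 ^ L * K + 1) from (div_mul_cancel₀ _ (by positivity)).symm]
    ring
  have hnear : ∀ᶠ y in 𝓝 x, f^[N] y ∈ ball a r :=
    (hf.iterate N).continuousAt.preimage_mem_nhds (isOpen_ball.mem_nhds hN)
  have hclose : ∀ᶠ y in 𝓝 x, ∀ n ∈ Finset.range L, dist (f^[n] x) (f^[n] y) < γ :=
    (Finset.eventually_all _).2 fun n _ =>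
      (Metric.tendsto_nhds.1 (hf.iterate n).continuousAt γ hγ).mono fun y h => by
        rwa [dist_comm]
  filter_upwards [hnear, hclose] with y hNy hy
  refine (ciSup_le fun ⟨k, n⟩ => ?_).trans_lt (half_lt_self hε)
  rcases le_or_gt K k with hk | hk
  · refine (contractingTerm_le_pow hT hN hNy (k, n)).trans (le_trans ?_ hK.le)
    exact mul_le_mul_of_nonneg_right (pow_le_pow_of_le_one (by norm_num) (by norm_num) hk)
      (by positivity)
  rcases le_or_gt (N + T k) n with hn | hn
  · rw [contractingTerm_eq_zero hT hN hNy hn]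
    positivity
  have hnL : n < L := by
    have := Finset.le_sup (f := T) (Finset.mem_range.2 hk)
    omega
  have hkK : (k + 1 : ℝ) ≤ K := by exact_mod_cast hk
  calc contractingTerm f a T x y (k, n) ≤ 1 * 2 ^ L * (K * γ) := by
        refine mul_le_mul (mul_le_mul (contractingWeight_le_one k)
          (pow_le_pow_right₀ one_le_two hnL.le) (by positivity) zero_le_one)
          ((collapsedDist_le_mul_dist _ _ _ _).trans
            (mul_le_mul hkK (hy n (Finset.mem_range.2 hnL)).le dist_nonneg (by positivity)))
          (collapsedDist_nonneg _ _ _ _) (by positivity)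
    _ ≤ ε / 2 := by linarith

theorem TendstoUniformlyOn.exists_isUniformAttractionTime
    (h : TendstoUniformlyOn (f^[·]) (fun _ => a) atTop (ball a r)) :
    ∃ T, IsUniformAttractionTime f a r T := by
  have hk : ∀ k : ℕ, ∃ N, ∀ n ≥ N, ∀ y ∈ ball a r, dist a (f^[n] y) < 1 / (k + 1) :=
    fun k => eventually_atTop.1 (Metric.tendstoUniformlyOn_iff.1 h _ (by positivity))
  choose T hT using hk
  exact ⟨T, fun k n hn y hy => by rw [mem_closedBall, dist_comm]; exact (hT k n hn y hy).le⟩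

end ContractingDist

section Dynamics

variable {Y : Type*}

def LyapunovStable [PseudoMetricSpace Y] (f : Y → Y) (a : Y) : Prop :=
  ∀ ε > 0, ∃ δ > 0, ∀ y, dist y a < δ → ∀ n, dist (f^[n] y) a < ε

theorem iterate_apply_add_of_backward_orbit {f : Y → Y} {E : ℕ → Y}
    (h : ∀ m, f (E (m + 1)) = E m) (s m : ℕ) : f^[s] (E (m + s)) = E m := by
  induction s generalizing m with
  | zero => rfl
  | succ s ih =>
    rw [Function.iterate_succ_apply, ← add_assoc, h, ih]

theorem mapsTo_of_maximal_basin [TopologicalSpace Y] {f : Y → Y} (hf : Continuous f)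
    {a : Y} {U : Set Y} (hUopen : IsOpen U) (haU : a ∈ U)
    (hattr : ∀ y ∈ U, Tendsto (f^[·] y) atTop (𝓝 a))
    (hmax : ∀ V, IsOpen V → (∀ y ∈ V, Tendsto (f^[·] y) atTop (𝓝 a)) → V ⊆ U) :
    MapsTo f U U := by
  have hW : (⋃ N, f^[N] ⁻¹' U) ⊆ U := by
    refine hmax _ (isOpen_iUnion fun N => hUopen.preimage (hf.iterate N)) fun y hy => ?_
    obtain ⟨N, hN⟩ := mem_iUnion.1 hy
    exact (tendsto_add_atTop_iff_nat N).1 <| by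
      simpa only [Function.iterate_add_apply] using hattr _ hN
  intro y hy
  obtain ⟨N, hN⟩ := ((hattr y hy).eventually (hUopen.mem_nhds haU)).exists_forall_of_atTop
  refine hW (mem_iUnion.2 ⟨N, ?_⟩)
  rw [mem_preimage, ← Function.iterate_succ_apply]
  exact hN _ N.le_succ

theorem LyapunovStable.tendstoUniformlyOn [PseudoMetricSpace Y] {f : Y → Y} {a : Y}
    (hs : LyapunovStable f a) (hf : Continuous f) {K : Set Y} (hK : IsCompact K)
    (hattr : ∀ y ∈ K, Tendsto (f^[·] y) atTop (𝓝 a)) :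
    TendstoUniformlyOn (f^[·]) (fun _ => a) atTop K := by
  refine Metric.tendstoUniformlyOn_iff.2 fun ε hε => ?_
  obtain ⟨δ, hδ, hstab⟩ := hs ε hε
  obtain ⟨t, ht⟩ := hK.elim_finite_subcover (fun m => f^[m] ⁻¹' ball a δ)
    (fun m => isOpen_ball.preimage (hf.iterate m))
    fun y hy => mem_iUnion.2 ((hattr y hy).eventually (ball_mem_nhds a hδ)).exists
  refine eventually_atTop.2 ⟨t.sup id, fun n hn y hy => ?_⟩
  obtain ⟨m, hmt, hm⟩ := mem_iUnion₂.1 (ht hy)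
  have hmn : m ≤ n := (Finset.le_sup (f := id) hmt).trans hn
  rw [dist_comm, ← Nat.sub_add_cancel hmn, Function.iterate_add_apply]
  exact hstab _ hm _

theorem exists_seq_first_exit_time [PseudoMetricSpace Y] {f : Y → Y} {a : Y}
    (hf : Continuous f) (hfix : f a = a) {ε : ℝ} (hε : 0 < ε)
    (hbad : ∀ δ > 0, ∃ y, dist y a < δ ∧ ∃ n, ε ≤ dist (f^[n] y) a) :
    ∃ (y : ℕ → Y) (n : ℕ → ℕ), Tendsto n atTop atTop ∧
      (∀ k, ε ≤ dist (f^[n k] (y k)) a) ∧ ∀ k, ∀ j < n k, dist (f^[j] (y k)) a < ε := by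
  classical
  choose y hya hy using fun k : ℕ => hbad (1 / (k + 1)) (by positivity)
  have hlim : Tendsto y atTop (𝓝 a) :=
    tendsto_iff_dist_tendsto_zero.2 <| squeeze_zero (fun _ => dist_nonneg)
      (fun k => (hya k).le) tendsto_one_div_add_atTop_nhds_zero_nat
  refine ⟨y, fun k => Nat.find (hy k), Filter.tendsto_atTop.2 fun J => ?_,
    fun k => Nat.find_spec (hy k), fun k j hj => not_le.1 (Nat.find_min (hy k) hj)⟩
  -- the exit times tend to infinity because every iterate is continuous at the fixed point `a`
  have hnear : ∀ᶠ k in atTop, ∀ j ∈ Finset.range J, dist (f^[j] (y k)) a < ε :=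
    (Finset.eventually_all _).2 fun j _ => by
      have := ((hf.iterate j).tendsto a).comp hlim
      rw [Function.iterate_fixed hfix] at this
      exact (tendsto_iff_dist_tendsto_zero.1 this).eventually_lt_const hε
  filter_upwards [hnear] with k hk
  exact (Nat.le_find_iff _ _).2 fun j hj => not_le.2 (hk j (Finset.mem_range.2 hj))

theorem exists_tendsto_backward_orbit [TopologicalSpace Y] [T2Space Y] {f : Y → Y}
    (hf : Continuous f) {K : Set Y} (hK : IsCompact K) {y : ℕ → Y} {n : ℕ → ℕ}
    (hn : Tendsto n atTop atTop)
    (hyK : ∀ k, ∀ j < n k, f^[j] (y k) ∈ K) :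
    ∃ (𝒰 : Ultrafilter ℕ) (E : ℕ → Y), (𝒰 : Filter ℕ) ≤ atTop ∧
      (∀ m, f (E (m + 1)) = E m) ∧
      ∀ m, Tendsto (fun k => f^[n k - (m + 1)] (y k)) (𝒰 : Filter ℕ) (𝓝 (E m)) := by
  obtain ⟨𝒰, h𝒰⟩ := Ultrafilter.exists_le (atTop : Filter ℕ)
  have hlim : ∀ m, ∃ E, Tendsto (fun k => f^[n k - (m + 1)] (y k)) (𝒰 : Filter ℕ) (𝓝 E) :=
      fun m => by
    obtain ⟨E, -, hE⟩ := hK.ultrafilter_le_nhds' (𝒰.map _) <| Ultrafilter.mem_map.2 <|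
      h𝒰 ((hn.eventually_ge_atTop (m + 1)).mono fun k hk => hyK k (n k - (m + 1)) (by omega))
    exact ⟨E, hE⟩
  choose E hE using hlim
  refine ⟨𝒰, E, h𝒰, fun m =>
    tendsto_nhds_unique (((hf.tendsto _).comp (hE (m + 1))).congr' ?_) (hE m), hE⟩
  filter_upwards [h𝒰 (hn.eventually_ge_atTop (m + 2))] with k hk
  change f (f^[n k - (m + 1 + 1)] (y k)) = f^[n k - (m + 1)] (y k)
  rw [← Function.iterate_succ_apply' f]
  congr 1
  omega

theorem frequently_mem_of_backward_orbit [TopologicalSpace Y] {f : Y → Y} (hf : Continuous f)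
    {a : Y} {K : Set Y} (hK : IsCompact K) (hattr : ∀ y ∈ K, Tendsto (f^[·] y) atTop (𝓝 a))
    {E : ℕ → Y} (hEK : ∀ m, E m ∈ K) (hE : ∀ m, f (E (m + 1)) = E m) {V : Set Y}
    (hV : V ∈ 𝓝 a) : ∃ᶠ m in atTop, E m ∈ V := by
  obtain ⟨𝒱, h𝒱⟩ := Ultrafilter.exists_le (atTop : Filter ℕ)
  obtain ⟨P, hPK, hP⟩ := hK.ultrafilter_le_nhds' (𝒱.map E)
    (Ultrafilter.mem_map.2 (Eventually.of_forall hEK))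
  refine frequently_atTop.2 fun N => ?_
  obtain ⟨s, hs, hsN⟩ := (((hattr P hPK).eventually (interior_mem_nhds.2 hV)).and
    (eventually_ge_atTop N)).exists
  -- along `𝒱`, the points `E (m - s) = f^[s] (E m)` converge to `f^[s] P`
  have hlim : Tendsto (fun m => f^[s] (E m)) (𝒱 : Filter ℕ) (𝓝 (f^[s] P)) :=
    ((hf.iterate s).tendsto P).comp hP
  obtain ⟨m, hmV, hms⟩ := ((hlim.eventually (isOpen_interior.mem_nhds hs)).and
    (h𝒱 (eventually_ge_atTop (s + N)))).exists
  obtain ⟨j, rfl⟩ := Nat.exists_eq_add_of_le' (le_of_add_le_left hms)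
  rw [iterate_apply_add_of_backward_orbit hE] at hmV
  exact ⟨j, by omega, interior_subset hmV⟩

end Dynamics

theorem exists_mem_forall_mem_cthickening {Y : Type*} [MetricSpace Y] {A : Set Y}
    (hA : IsComplete A) {E : ℕ → Set Y} {σ : ℕ → ℝ} (hEA : ∀ j, E j ⊆ A)
    (hσ : ∀ j, σ (j + 1) ≤ σ j / 2)
    (hE : ∀ j, ∀ x ∈ A, ∃ y ∈ E (j + 1), dist x y ≤ σ j / 2) {y₀ : Y}
    (hy₀ : y₀ ∈ E 0) :
    ∃ z ∈ A, (∀ j, z ∈ cthickening (σ j) (E j)) ∧ dist y₀ z ≤ σ 0 := by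
  have : Nonempty Y := ⟨y₀⟩
  choose! g hgE hgd using hE
  let y : ℕ → Y := fun j => Nat.rec y₀ (fun j z => g j z) j
  have hy : ∀ j, y j ∈ E j := by
    intro j
    induction j with
    | zero => exact hy₀
    | succ j ih => exact hgE j _ (hEA j ih)
  have hσl : ∀ j l, σ (l + j) ≤ σ j * (1 / 2) ^ l := by
    intro j l
    induction l with
    | zero => simp
    | succ l ih =>
      rw [pow_succ, Nat.add_right_comm]
      linarith [hσ (l + j)]
  have hstep : ∀ j l, dist (y (l + j)) (y (l + 1 + j)) ≤ σ j / 2 * (1 / 2) ^ l := fun j l => by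
    rw [Nat.add_right_comm]
    exact (hgd _ _ (hEA _ (hy _))).trans (by linarith [hσl j l])
  obtain ⟨z, hzA, hz⟩ := cauchySeq_tendsto_of_isComplete hA (fun j => hEA j (hy j))
    (cauchySeq_of_le_geometric (1 / 2) (σ 0 / 2) (by norm_num) (hstep 0))
  have hdist : ∀ j, dist (y j) z ≤ σ j := fun j => by
    have := dist_le_of_le_geometric_of_tendsto₀ (1 / 2) (σ j / 2) (by norm_num) (hstep j)
      ((tendsto_add_atTop_iff_nat j).2 hz)
    norm_num at this
    linarith
  exact ⟨z, hzA, fun j => mem_cthickening_of_dist_le z (y j) (σ j) (E j) (hy j)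
    (by rw [dist_comm]; exact hdist j), hdist 0⟩

namespace TopologicalSpace.NonemptyCompacts

theorem le_of_tendsto_of_tendsto {X ι : Type*} [TopologicalSpace X] [T2Space X] {l : Filter ι}
    [l.NeBot] {S T : ι → NonemptyCompacts X} {B C : NonemptyCompacts X}
    (hS : Tendsto S l (𝓝 B)) (hT : Tendsto T l (𝓝 C)) (h : ∀ᶠ i in l, S i ≤ T i) :
    B ≤ C :=
  sup_eq_right.1 <| tendsto_nhds_unique (hS.sup_nhds hT) <|
    hT.congr' (h.mono fun _ hi => (sup_eq_right.2 hi).symm)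

variable {X : Type*} [MetricSpace X]

theorem hausdorffEDist_ne_top (B C : NonemptyCompacts X) : hausdorffEDist (B : Set X) C ≠ ⊤ :=
  hausdorffEDist_ne_top_of_nonempty_of_bounded B.nonempty C.nonempty B.isCompact.isBounded
    C.isCompact.isBounded

theorem exists_dist_lt_of_dist_lt {B C : NonemptyCompacts X} {r : ℝ} (h : dist B C < r) {x : X}
    (hx : x ∈ B) : ∃ y ∈ C, dist x y < r :=
  exists_dist_lt_of_hausdorffDist_lt hx h (hausdorffEDist_ne_top B C)

theorem infDist_le_dist_of_mem {B C : NonemptyCompacts X} {x : X} (hx : x ∈ B) :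
    infDist x C ≤ dist B C :=
  infDist_le_hausdorffDist_of_mem hx (hausdorffEDist_ne_top B C)

theorem subset_cthickening_of_dist_le {B C : NonemptyCompacts X} {r : ℝ} (h : dist B C ≤ r) :
    (B : Set X) ⊆ cthickening r C := fun x hx => by
  obtain ⟨y, hy, hxy⟩ := C.isCompact.exists_infDist_eq_dist C.nonempty x
  exact mem_cthickening_of_dist_le x y r C hy (hxy ▸ (infDist_le_dist_of_mem hx).trans h)

theorem dist_le_of_le_of_subset_cthickening {B C : NonemptyCompacts X} {r : ℝ} (hr : 0 ≤ r)
    (hBC : B ≤ C) (hC : (C : Set X) ⊆ cthickening r B) : dist C B ≤ r := by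
  refine hausdorffDist_le_of_mem_dist hr (fun x hx => ?_) fun x hx =>
    ⟨x, hBC hx, by simpa using hr⟩
  rw [B.isCompact.cthickening_eq_biUnion_closedBall hr] at hC
  simpa using hC hx

theorem exists_dist_le_infDist_of_le {B C : NonemptyCompacts X} (h : B ≤ C) :
    ∃ x ∈ C, dist B C ≤ infDist x B := by
  obtain ⟨x, hxC, hx⟩ :=
    C.isCompact.exists_isMaxOn C.nonempty (continuous_infDist_pt _).continuousOn
  refine ⟨x, hxC, hausdorffDist_le_of_infDist infDist_nonneg (fun y hy => ?_) fun y hy => hx hy⟩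
  rw [infDist_zero_of_mem (h hy)]
  exact infDist_nonneg

end TopologicalSpace.NonemptyCompacts

section Hyperspace

open NonemptyCompacts

variable {X : Type*} [MetricSpace X] {Φ : NonemptyCompacts X → NonemptyCompacts X}
  {A : NonemptyCompacts X}

theorem monotone_of_coe_eq_biUnion {F : X → NonemptyCompacts X}
    (h : ∀ B : NonemptyCompacts X, (Φ B : Set X) = ⋃ x ∈ (B : Set X), (F x : Set X)) :
    Monotone Φ := fun B C hBC => by
  change (Φ B : Set X) ⊆ Φ C
  rw [h, h]
  exact biUnion_subset_biUnion_left hBC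

theorem exists_isCompact_cthickening_closedBall_subset [LocallyCompactSpace X]
    {U : Set (NonemptyCompacts X)} (hU : U ∈ 𝓝 A) :
    ∃ δ > 0, IsCompact (cthickening δ (A : Set X)) ∧ closedBall A δ ⊆ U := by
  obtain ⟨δ₁, hδ₁, hball⟩ := Metric.mem_nhds_iff.1 hU
  obtain ⟨K, hK, hAK⟩ := exists_compact_superset A.isCompact
  obtain ⟨δ₂, hδ₂, hsub⟩ := A.isCompact.exists_cthickening_subset_open isOpen_interior hAK
  refine ⟨min (δ₁ / 2) δ₂, by positivity, hK.of_isClosed_subset isClosed_cthickening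
    ((cthickening_mono (min_le_right _ _) _).trans (hsub.trans interior_subset)),
    (closedBall_subset_ball ?_).trans hball⟩
  linarith [min_le_left (δ₁ / 2) δ₂]

theorem exists_backward_orbit_far (hΦ : Continuous Φ) (hmono : Monotone Φ) {δ : ℝ}
    (hδ : 0 ≤ δ) (hK : IsCompact (cthickening δ (A : Set X)))
    (hattr : ∀ B ∈ closedBall A δ, Tendsto (Φ^[·] B) atTop (𝓝 A)) {ε : ℝ} (hεδ : ε ≤ δ)
    {B : ℕ → NonemptyCompacts X} {n : ℕ → ℕ} (hn : Tendsto n atTop atTop)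
    (hbad : ∀ k, ε ≤ dist (Φ^[n k] (B k)) A)
    (hgood : ∀ k, ∀ j < n k, dist (Φ^[j] (B k)) A < ε) :
    ∃ E : ℕ → NonemptyCompacts X, (∀ m, E m ≤ A) ∧ (∀ m, dist (E m) A ≤ ε) ∧
      (∀ m, Φ (E (m + 1)) = E m) ∧ ε ≤ dist (Φ (E 0)) A := by
  obtain ⟨𝒰, E, h𝒰, hE, hlim⟩ := exists_tendsto_backward_orbit hΦ
    (isCompact_subsets_of_isCompact hK) hn fun k j hj =>
      subset_cthickening_of_dist_le ((hgood k j hj).le.trans hεδ)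
  have hn𝒰 : ∀ J, ∀ᶠ k in (𝒰 : Filter ℕ), J ≤ n k := fun J =>
    h𝒰 (hn.eventually_ge_atTop J)
  let Th : NonemptyCompacts X :=
    ⟨⟨cthickening δ (A : Set X), hK⟩, A.nonempty.mono (self_subset_cthickening _)⟩
  -- the orbit of the thickening `Th` dominates the orbits of all the `B k` and tends to `A`
  have hTh : Tendsto (Φ^[·] Th) atTop (𝓝 A) :=
    hattr Th (dist_le_of_le_of_subset_cthickening hδ
      (self_subset_cthickening _) subset_rfl)
  refine ⟨E, fun m => ?_, fun m => ?_, hE, ?_⟩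
  · refine le_of_tendsto_of_tendsto (hlim m)
      ((hTh.comp ((tendsto_sub_atTop_nat (m + 1)).comp hn)).mono_left h𝒰) ?_
    filter_upwards [hn𝒰 1] with k hk
    exact hmono.iterate _ (subset_cthickening_of_dist_le ((hgood k 0 hk).le.trans hεδ))
  · refine le_of_tendsto ((hlim m).dist tendsto_const_nhds) ?_
    filter_upwards [hn𝒰 (m + 1)] with k hk
    exact (hgood k _ (by omega)).le
  · refine ge_of_tendsto (((hΦ.tendsto _).comp (hlim 0)).dist tendsto_const_nhds) ?_
    filter_upwards [hn𝒰 1] with k hk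
    rw [Function.comp_apply, ← Function.iterate_succ_apply' Φ, Nat.succ_eq_add_one,
      Nat.sub_add_cancel hk]
    exact hbad k

theorem exists_far_of_subset_cthickening (hΦ : Continuous Φ) (hmono : Monotone Φ)
    (hfix : Φ A = A) {E : NonemptyCompacts X} (hEA : E ≤ A) {n : ℕ} {ε : ℝ} (hε : 0 < ε)
    (hfar : ε ≤ dist (Φ^[n] E) A) :
    ∃ σ > 0, ∀ S ≤ A, (S : Set X) ⊆ cthickening σ E → ε / 2 ≤ dist (Φ^[n] S) A := by
  obtain ⟨x, hxA, hx⟩ := exists_dist_le_infDist_of_le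
    ((hmono.iterate n hEA).trans_eq (Function.iterate_fixed hfix n))
  obtain ⟨ρ, hρ, hunif⟩ := Metric.uniformContinuousOn_iff.1
    ((isCompact_subsets_of_isCompact A.isCompact).uniformContinuousOn_of_continuous
      (hΦ.iterate n).continuousOn) (ε / 2) (half_pos hε)
  refine ⟨ρ / 2, half_pos hρ, fun S hSA hSE => ?_⟩
  -- every such `S` lies in `G`, whose image stays `ε / 2`-far from the point `x` of `A`
  let G : NonemptyCompacts X := ⟨⟨(A : Set X) ∩ cthickening (ρ / 2) E,
    A.isCompact.inter_right isClosed_cthickening⟩,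
    E.nonempty.mono fun y hy => ⟨hEA hy, self_subset_cthickening _ hy⟩⟩
  have hEG : E ≤ G := fun y hy => ⟨hEA hy, self_subset_cthickening _ hy⟩
  have hGE : dist (Φ^[n] G) (Φ^[n] E) < ε / 2 := hunif G inter_subset_left E hEA <|
    (dist_le_of_le_of_subset_cthickening (half_pos hρ).le hEG inter_subset_right).trans_lt
      (half_lt_self hρ)
  have hxE : infDist x (Φ^[n] E) ≤ infDist x (Φ^[n] G) + dist (Φ^[n] G) (Φ^[n] E) :=
    infDist_le_infDist_add_hausdorffDist (hausdorffEDist_ne_top _ _)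
  calc ε / 2 ≤ infDist x (Φ^[n] G) := by linarith
    _ ≤ infDist x (Φ^[n] S) :=
      infDist_le_infDist_of_subset (hmono.iterate n fun y hy => ⟨hSA hy, hSE hy⟩)
        (Φ^[n] S).nonempty
    _ ≤ dist (Φ^[n] S) A := by
      rw [dist_comm]
      exact infDist_le_dist_of_mem hxA

theorem exists_far_subsets_of_not_lyapunovStable [LocallyCompactSpace X] (hΦ : Continuous Φ)
    (hmono : Monotone Φ) (hfix : Φ A = A) {U : Set (NonemptyCompacts X)} (hU : U ∈ 𝓝 A)
    (hattr : ∀ B ∈ U, Tendsto (Φ^[·] B) atTop (𝓝 A)) (hns : ¬ LyapunovStable Φ A) :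
    ∃ ε > 0, ∀ η > 0, ∀ N, ∃ E ≤ A, dist E A < η ∧ ∃ n ≥ N, ∃ σ > 0,
      σ ≤ η ∧ ∀ S ≤ A, (S : Set X) ⊆ cthickening σ E → ε ≤ dist (Φ^[n] S) A := by
  obtain ⟨δ, hδ, hK, hδU⟩ := exists_isCompact_cthickening_closedBall_subset hU
  obtain ⟨ε, hε, hbad⟩ :
      ∃ ε > 0, ∀ δ > 0, ∃ B, dist B A < δ ∧ ∃ n, ε ≤ dist (Φ^[n] B) A := by
    simpa [LyapunovStable] using hns
  have hε₀ : 0 < min ε δ := lt_min hε hδ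
  obtain ⟨B, n, hn, hbadB, hgood⟩ := exists_seq_first_exit_time hΦ hfix hε₀ fun δ' hδ' => by
    obtain ⟨B, hB, m, hm⟩ := hbad δ' hδ'
    exact ⟨B, hB, m, (min_le_left _ _).trans hm⟩
  obtain ⟨E, hEA, hEd, hE, hfar⟩ := exists_backward_orbit_far hΦ hmono hδ.le hK
    (fun B hB => hattr B (hδU hB)) (min_le_right _ _) hn hbadB hgood
  have hEK : ∀ m, E m ∈ {S | S ≤ A} ∩ closedBall A δ := fun m =>
    ⟨hEA m, (hEd m).trans (min_le_right _ _)⟩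
  refine ⟨min ε δ / 2, half_pos hε₀, fun η hη N => ?_⟩
  obtain ⟨m, hm, hmA⟩ := frequently_atTop.1 (frequently_mem_of_backward_orbit hΦ
    ((isCompact_subsets_of_isCompact A.isCompact).inter_right isClosed_closedBall)
    (fun B hB => hattr B (hδU hB.2)) hEK hE (ball_mem_nhds A hη)) N
  have hfar' : min ε δ ≤ dist (Φ^[m + 1] (E m)) A := by
    have h := iterate_apply_add_of_backward_orbit hE m 0
    rw [zero_add] at h
    rwa [Function.iterate_succ_apply', h]
  obtain ⟨σ, hσ, hS⟩ := exists_far_of_subset_cthickening hΦ hmono hfix (hEA m) hε₀ hfar'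
  exact ⟨E m, hEA m, hmA, m + 1, by omega, min σ η, lt_min hσ hη, min_le_right _ _,
    fun S hSA hSE => hS S hSA (hSE.trans (cthickening_mono (min_le_left _ _) _))⟩

theorem exists_le_forall_subset_cthickening {E : ℕ → NonemptyCompacts X} {σ : ℕ → ℝ}
    (hEA : ∀ j, E j ≤ A) (hσ : ∀ j, σ (j + 1) ≤ σ j / 2)
    (hE : ∀ j, dist (E (j + 1)) A < σ j / 2) {η : ℝ} (hE0 : dist (E 0) A < η) :
    ∃ R ≤ A, dist R A ≤ η + σ 0 ∧ ∀ j, (R : Set X) ⊆ cthickening (σ j) (E j) := by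
  have hnear : ∀ x ∈ A, ∃ z ∈ (A : Set X), (∀ j, z ∈ cthickening (σ j) (E j)) ∧
      dist x z ≤ η + σ 0 := fun x hx => by
    obtain ⟨y, hy, hxy⟩ := exists_dist_lt_of_dist_lt (dist_comm (E 0) A ▸ hE0) hx
    obtain ⟨z, hzA, hz, hyz⟩ := exists_mem_forall_mem_cthickening A.isCompact.isComplete hEA hσ
      (fun j x hx => (exists_dist_lt_of_dist_lt (dist_comm (E (j + 1)) A ▸ hE j) hx).imp
        fun y hy => ⟨hy.1, hy.2.le⟩) hy
    exact ⟨z, hzA, hz, (dist_triangle x y z).trans (add_le_add hxy.le hyz)⟩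
  obtain ⟨x, hx⟩ := A.nonempty
  obtain ⟨z, hzA, hz, hxz⟩ := hnear x hx
  let R : NonemptyCompacts X := ⟨⟨(A : Set X) ∩ ⋂ j, cthickening (σ j) (E j),
    A.isCompact.inter_right (isClosed_iInter fun j => isClosed_cthickening)⟩,
    ⟨z, hzA, mem_iInter.2 hz⟩⟩
  refine ⟨R, inter_subset_left, ?_, fun j => inter_subset_right.trans (iInter_subset _ j)⟩
  refine hausdorffDist_le_of_mem_dist (dist_nonneg.trans hxz) (fun y hy => ⟨y, hy.1, ?_⟩)
    fun y hy => ?_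
  · simpa using dist_nonneg.trans hxz
  · obtain ⟨z, hzA, hz, hyz⟩ := hnear y hy
    exact ⟨z, ⟨hzA, mem_iInter.2 hz⟩, hyz⟩

theorem lyapunovStable_of_monotone [LocallyCompactSpace X] (hΦ : Continuous Φ)
    (hmono : Monotone Φ) (hfix : Φ A = A) {U : Set (NonemptyCompacts X)} (hU : U ∈ 𝓝 A)
    (hattr : ∀ B ∈ U, Tendsto (Φ^[·] B) atTop (𝓝 A)) : LyapunovStable Φ A := by
  by_contra hns
  obtain ⟨ε, hε, hfar⟩ := exists_far_subsets_of_not_lyapunovStable hΦ hmono hfix hU hattr hns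
  obtain ⟨η, hη, hηU⟩ := Metric.mem_nhds_iff.1 hU
  have : Nonempty (NonemptyCompacts X) := ⟨A⟩
  choose! E hEA hEd n hnN σ hσ hση hfarE using hfar
  -- the `(j + 1)`-st set is chosen at scale `σ / 2` of the `j`-th one and later than its time
  let p : ℕ → ℝ × ℕ := fun j =>
    Nat.rec (η / 4, 0) (fun _ q => (σ q.1 q.2 / 2, n q.1 q.2 + 1)) j
  have hp : ∀ j, 0 < (p j).1 := fun j => by
    induction j with
    | zero => exact div_pos hη four_pos
    | succ j ih => exact half_pos (hσ _ ih _)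
  have hpn : ∀ j, j ≤ n (p j).1 (p j).2 := fun j => by
    induction j with
    | zero => exact Nat.zero_le _
    | succ j ih => exact (Nat.succ_le_succ ih).trans (hnN _ (hp (j + 1)) _)
  obtain ⟨R, hRA, hRd, hRE⟩ := exists_le_forall_subset_cthickening
    (E := fun j => E (p j).1 (p j).2) (σ := fun j => σ (p j).1 (p j).2)
    (fun j => hEA _ (hp j) _) (fun j => hση _ (hp (j + 1)) _) (fun j => hEd _ (hp (j + 1)) _)
    (hEd _ (hp 0) _)
  have hp0 : (p 0).1 = η / 4 := rfl
  have hRU : R ∈ U := hηU <| mem_ball.2 <| hRd.trans_lt <| by linarith [hση _ (hp 0) (p 0).2]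
  obtain ⟨N, hN⟩ := eventually_atTop.1 ((hattr R hRU).eventually (ball_mem_nhds A hε))
  exact (hfarE _ (hp N) _ R hRA (hRE N)).not_gt (hN _ (hpn N))

end Hyperspace

theorem attractor_contraction_in_basin_general
    {X : Type*} [MetricSpace X] [LocallyCompactSpace X]
    (F : X → NonemptyCompacts X)
    (FK : NonemptyCompacts X → NonemptyCompacts X) (hFKcont : Continuous FK)
    (hFK : ∀ B : NonemptyCompacts X, (FK B : Set X) = ⋃ x ∈ (B : Set X), (F x : Set X))
    (A : NonemptyCompacts X) (hfix : FK A = A)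
    (U : Set (NonemptyCompacts X)) (hUopen : IsOpen U) (hAU : A ∈ U)
    (hattr : ∀ B ∈ U, Tendsto (fun n => dist (FK^[n] B) A) atTop (nhds 0))
    (hmax : ∀ V : Set (NonemptyCompacts X), IsOpen V →
      (∀ B ∈ V, Tendsto (fun n => dist (FK^[n] B) A) atTop (nhds 0)) → V ⊆ U) :
    ∃ D : NonemptyCompacts X → NonemptyCompacts X → ℝ,
      -- `D` is a metric on `U`:
      (∀ B ∈ U, ∀ B' ∈ U, D B B' = 0 ↔ B = B') ∧
      (∀ B ∈ U, ∀ B' ∈ U, D B B' = D B' B) ∧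
      (∀ B ∈ U, ∀ B' ∈ U, ∀ B'' ∈ U, D B B'' ≤ D B B' + D B' B'') ∧
      -- `D` induces on `U` the same topology as the Hausdorff metric:
      (∀ B ∈ U, ∀ s : Set (NonemptyCompacts X),
        s ∈ nhdsWithin B U ↔ ∃ ε > (0 : ℝ), {C | C ∈ U ∧ D B C < ε} ⊆ s) ∧
      -- `FK` restricted to `U` is a `D`-contraction:
      (∀ B ∈ U, FK B ∈ U) ∧
      ∃ c : ℝ, 0 ≤ c ∧ c < 1 ∧
        ∀ B ∈ U, ∀ B' ∈ U, D (FK B) (FK B') ≤ c * D B B' := by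
  have hU := hUopen.mem_nhds hAU
  have hattr' : ∀ B ∈ U, Tendsto (FK^[·] B) atTop (𝓝 A) := fun B hB =>
    tendsto_iff_dist_tendsto_zero.2 (hattr B hB)
  have hstab := lyapunovStable_of_monotone hFKcont (monotone_of_coe_eq_biUnion hFK) hfix hU hattr'
  obtain ⟨K, hKA, hKU, hK⟩ := local_compact_nhds hU
  obtain ⟨r, hr, hrK⟩ := Metric.mem_nhds_iff.1 hKA
  obtain ⟨T, hT⟩ := ((hstab.tendstoUniformlyOn hFKcont hK fun B hB => hattr' B (hKU hB)).mono
    hrK).exists_isUniformAttractionTime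
  refine ⟨contractingDist FK A T, fun B hB C hC => contractingDist_eq_zero_iff hT hr
    (hattr' B hB) (hattr' C hC), fun B _ C _ => contractingDist_comm B C,
    fun B hB C hC D hD => contractingDist_triangle hT hr (hattr' B hB) (hattr' C hC) (hattr' D hD),
    fun B hB s => ?_, mapsTo_of_maximal_basin hFKcont hUopen hAU hattr' fun V hV h =>
      hmax V hV fun B hB => tendsto_iff_dist_tendsto_zero.1 (h B hB),
    1 / 2, by norm_num, by norm_num,
    fun B hB C hC => contractingDist_map_le hT hr (hattr' B hB) (hattr' C hC)⟩
  rw [nhdsWithin_eq_nhds.2 (hUopen.mem_nhds hB)]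
  refine ⟨fun hs => ?_, fun ⟨ε, hε, hsub⟩ => ?_⟩
  · obtain ⟨δ, hδ, hball⟩ := Metric.mem_nhds_iff.1 hs
    obtain ⟨ε, hε, h⟩ := exists_contractingDist_lt_imp_dist_lt hT hr (hattr' B hB) hδ
    refine ⟨ε, hε, fun C ⟨hC, hCε⟩ => hball ?_⟩
    rw [mem_ball, dist_comm]
    exact h C (hattr' C hC) hCε
  · filter_upwards [eventually_contractingDist_lt hFKcont hT hr (hattr' B hB) hε,
      hUopen.mem_nhds hB] with C hCε hC using hsub ⟨hC, hCε⟩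

/-- **Jánoš-type theorem for multivalued operators.**
Let `(X,d)` be a locally compact complete metric space and let `F : X → K(X)` be a
continuous multivalued map inducing the continuous operator `FK` on the hyperspace.
Assume `FK` has an attractor `A` with basin of attraction `U` (an open subset of the
hyperspace, maximal among open sets all of whose members are attracted to `A`).
Then there is a metric `D` on `U` inducing the same topology as the restriction of the
Hausdorff metric to `U`, such that `FK` maps `U` into itself and is a contraction on `U`
with respect to `D`. -/
theorem attractor_contraction_in_basin
    {X : Type*} [MetricSpace X] [LocallyCompactSpace X] [CompleteSpace X]
    (F : X → NonemptyCompacts X) (hF : Continuous F)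
    (FK : NonemptyCompacts X → NonemptyCompacts X) (hFKcont : Continuous FK)
    (hFK : ∀ B : NonemptyCompacts X, (FK B : Set X) = ⋃ x ∈ (B : Set X), (F x : Set X))
    (A : NonemptyCompacts X) (hfix : FK A = A)
    (U : Set (NonemptyCompacts X)) (hUopen : IsOpen U) (hAU : A ∈ U)
    (hattr : ∀ B ∈ U, Tendsto (fun n => dist (FK^[n] B) A) atTop (nhds 0))
    (hmax : ∀ V : Set (NonemptyCompacts X), IsOpen V →
      (∀ B ∈ V, Tendsto (fun n => dist (FK^[n] B) A) atTop (nhds 0)) → V ⊆ U) :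
    ∃ D : NonemptyCompacts X → NonemptyCompacts X → ℝ,
      -- `D` is a metric on `U`:
      (∀ B ∈ U, ∀ B' ∈ U, D B B' = 0 ↔ B = B') ∧
      (∀ B ∈ U, ∀ B' ∈ U, D B B' = D B' B) ∧
      (∀ B ∈ U, ∀ B' ∈ U, ∀ B'' ∈ U, D B B'' ≤ D B B' + D B' B'') ∧
      -- `D` induces on `U` the same topology as the Hausdorff metric:
      (∀ B ∈ U, ∀ s : Set (NonemptyCompacts X),
        s ∈ nhdsWithin B U ↔ ∃ ε > (0 : ℝ), {C | C ∈ U ∧ D B C < ε} ⊆ s) ∧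
      -- `FK` restricted to `U` is a `D`-contraction:
      (∀ B ∈ U, FK B ∈ U) ∧
      ∃ c : ℝ, 0 ≤ c ∧ c < 1 ∧
        ∀ B ∈ U, ∀ B' ∈ U, D (FK B) (FK B') ≤ c * D B B' :=
  attractor_contraction_in_basin_general F FK hFKcont hFK A hfix U hUopen hAU hattr hmax
end

section
/- Let (X,d) be a metric space and let 𝔅 be an open subset of the hyperspace (K(X), d_H) of nonempty compact subsets of X. Then the set 𝔅̃ := { C ∈ K(X) : there exists B ∈ 𝔅 with B ⊆ C } is open in (K(X), d_H). -/
open TopologicalSpace Metric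

/-- **Openness of the family of supersets of members of an open family.**
If `𝔅` is an open subset of the hyperspace of nonempty compact subsets of a metric space
(with the Hausdorff metric), then `𝔅̃ = {C | ∃ B ∈ 𝔅, B ⊆ C}` is open as well. -/
theorem isOpen_supersets_of_isOpen
    {X : Type*} [MetricSpace X] (𝔅 : Set (NonemptyCompacts X)) (h𝔅 : IsOpen 𝔅) :
    IsOpen {C : NonemptyCompacts X | ∃ B ∈ 𝔅, (B : Set X) ⊆ (C : Set X)} := by
  rw [Metric.isOpen_iff]
  rintro C ⟨B, hB, hBC⟩
  obtain ⟨ε, hε, hball⟩ := Metric.isOpen_iff.1 h𝔅 B hB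
  refine ⟨ε / 2, by linarith, ?_⟩
  intro C' hC'
  rw [mem_ball, NonemptyCompacts.dist_eq] at hC'
  -- Hausdorff edist between the compact sets is finite
  have hfin : EMetric.hausdorffEdist (C : Set X) (C' : Set X) ≠ ⊤ :=
    Metric.hausdorffEdist_ne_top_of_nonempty_of_bounded C.nonempty C'.nonempty
      C.isCompact.isBounded C'.isCompact.isBounded
  have hCC' : hausdorffDist (C : Set X) (C' : Set X) < ε / 2 := by
    rwa [Metric.hausdorffDist_comm]
  -- define B'
  set S : Set X := {x ∈ (C' : Set X) | infDist x (B : Set X) ≤ ε / 2} with hS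
  have hScomp : IsCompact S := by
    apply C'.isCompact.of_isClosed_subset
    · exact C'.isCompact.isClosed.inter
        (isClosed_le (continuous_infDist_pt _) continuous_const)
    · exact fun x hx => hx.1
  have hSne : S.Nonempty := by
    obtain ⟨b, hb⟩ := B.nonempty
    obtain ⟨y, hy, hyd⟩ := Metric.exists_dist_lt_of_hausdorffDist_lt (hBC hb) hCC' hfin
    exact ⟨y, hy, le_of_lt (lt_of_le_of_lt (Metric.infDist_le_dist_of_mem hb)
      (by rwa [dist_comm] at hyd))⟩
  set B' : NonemptyCompacts X := ⟨⟨S, hScomp⟩, hSne⟩ with hB'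
  refine ⟨B', hball ?_, fun x hx => hx.1⟩
  rw [mem_ball, NonemptyCompacts.dist_eq]
  have h1 : hausdorffDist (S : Set X) (B : Set X) ≤ ε / 2 := by
    apply Metric.hausdorffDist_le_of_mem_dist (by linarith)
    · intro x hx
      obtain ⟨y, hy, hyd⟩ := B.isCompact.exists_infDist_eq_dist B.nonempty x
      exact ⟨y, hy, by rw [← hyd]; exact hx.2⟩
    · intro b hb
      obtain ⟨y, hy, hyd⟩ := Metric.exists_dist_lt_of_hausdorffDist_lt (hBC hb) hCC' hfin
      exact ⟨y, ⟨hy, le_of_lt (lt_of_le_of_lt (Metric.infDist_le_dist_of_mem hb)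
        (by rwa [dist_comm] at hyd))⟩, le_of_lt hyd⟩
  calc hausdorffDist (B' : Set X) (B : Set X) ≤ ε / 2 := h1
    _ < ε := by linarith
end

section
/- Let (Y, ρ) be a metric space, let f : Y → Y be continuous, and let y* be a fixed point of f that is stable (for every ε > 0 there is δ > 0 such that ρ(fⁿ(y), y*) < ε for all n ∈ ℕ and all y with ρ(y, y*) < δ). Let C be a compact subset of Y such that ρ(fⁿ(y), y*) → 0 as n → ∞ for every y ∈ C. Then the convergence is uniform on C: for every ε > 0 there exists N ∈ ℕ such that ρ(fⁿ(y), y*) < ε for all n ≥ N and all y ∈ C. -/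
open Filter

/-- **Uniform attraction on compact sets for stable fixed points.**
If `y` is a stable fixed point of a continuous map `f` on a metric space and every point
of a compact set `C` is attracted to `y`, then the attraction is uniform on `C`. -/
theorem uniform_convergence_on_compact_of_stable
    {Y : Type*} [MetricSpace Y] (f : Y → Y) (hf : Continuous f)
    (y : Y) (hfix : f y = y)
    (hstab : ∀ ε > 0, ∃ δ > 0, ∀ z : Y, dist z y < δ → ∀ n : ℕ, dist (f^[n] z) y < ε)
    (C : Set Y) (hC : IsCompact C)
    (hconv : ∀ z ∈ C, Tendsto (fun n => dist (f^[n] z) y) atTop (nhds 0)) :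
    ∀ ε > 0, ∃ N : ℕ, ∀ n ≥ N, ∀ z ∈ C, dist (f^[n] z) y < ε := by
  intro ε hε
  obtain ⟨δ, hδ, hδ'⟩ := hstab ε hε
  set V : ℕ → Set Y := fun n => {w | dist (f^[n] w) y < δ} with hV
  have hVopen : ∀ n, IsOpen (V n) := fun n =>
    isOpen_lt ((hf.iterate n).dist continuous_const) continuous_const
  have hcover : C ⊆ ⋃ n, V n := by
    intro z hz
    obtain ⟨n, hn⟩ := ((hconv z hz).eventually (gt_mem_nhds hδ)).exists
    exact Set.mem_iUnion.mpr ⟨n, hn⟩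
  obtain ⟨s, hs⟩ := hC.elim_finite_subcover V hVopen hcover
  refine ⟨s.sup id, fun n hn z hz => ?_⟩
  obtain ⟨k, hk, hzk⟩ := Set.mem_iUnion₂.mp (hs hz)
  have hk' : k ≤ n := le_trans (Finset.le_sup (f := id) hk) hn
  have : f^[n] z = f^[n - k] (f^[k] z) := by
    rw [← Function.iterate_add_apply, Nat.sub_add_cancel hk']
  rw [this]
  exact hδ' _ hzk _
end

section
/- Let X = {(x,y) ∈ ℝ² : x² + y² = 1} be the unit circle with the Euclidean metric d, let α be a real number with α/π irrational, and let f₂ : X → X be the rotation f₂(x,y) = (x cos α − y sin α, x sin α + y cos α). Define the multivalued map F : X → K(X) by F(p) = {p, f₂(p)}. Then there is no metric d' on X inducing the same topology as d and no c ∈ (0,1) such that d'_H(F(p), F(q)) ≤ c·d'(p,q) for all p, q ∈ X, where d'_H denotes the Hausdorff metric generated by d'. -/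
open Metric Filter

lemma nadler_step {Y : Type*} [MetricSpace Y] (g : Y → Y) (c : ℝ) (hc1 : c < 1)
    (hF : ∀ p q, Metric.hausdorffDist {p, g p} {q, g q} ≤ c * dist p q)
    {x y : Y} (hxy : x ≠ y) : dist x (g y) ≤ c * dist x y := by
  have hfin : EMetric.hausdorffEdist ({x, g x} : Set Y) {y, g y} ≠ ⊤ :=
    hausdorffEdist_ne_top_of_nonempty_of_bounded (by simp) (by simp)
      ((Set.toFinite _).isBounded)
      ((Set.toFinite _).isBounded)
  have h1 : infDist x {y, g y} ≤ c * dist x y :=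
    le_trans (infDist_le_hausdorffDist_of_mem (Set.mem_insert _ _) hfin) (hF x y)
  have hcpt : IsCompact ({y, g y} : Set Y) :=
    (Set.toFinite _).isCompact
  obtain ⟨z, hz, hzd⟩ := hcpt.exists_infDist_eq_dist (by simp) x
  rcases hz with rfl | hz
  · exfalso
    rw [hzd] at h1
    nlinarith [dist_pos.2 hxy]
  · rw [Set.mem_singleton_iff] at hz
    subst hz
    rw [hzd] at h1
    exact h1

lemma nadler_tendsto {Y : Type*} [MetricSpace Y] (g : Y → Y) (c : ℝ) (hc0 : 0 < c) (hc1 : c < 1)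
    (hfix : ∀ n, 1 ≤ n → ∀ p : Y, g^[n] p ≠ p)
    (hF : ∀ p q, Metric.hausdorffDist {p, g p} {q, g q} ≤ c * dist p q) (p : Y) :
    Tendsto (fun n => g^[n] p) atTop (nhds p) := by
  have key : ∀ n : ℕ, dist (g^[n+1] p) p ≤ c ^ n * dist p (g p) := by
    intro n
    induction n with
    | zero => simp [dist_comm]
    | succ n ih =>
      have hne : p ≠ g^[n+1] p := fun h => hfix (n+1) (by omega) p h.symm
      have := nadler_step g c hc1 hF hne
      rw [← Function.iterate_succ_apply' g (n+1) p] at this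
      rw [dist_comm]
      calc dist p (g^[n+2] p) ≤ c * dist p (g^[n+1] p) := this
        _ ≤ c * (c ^ n * dist p (g p)) := by
            rw [dist_comm p (g^[n+1] p)]
            exact mul_le_mul_of_nonneg_left ih hc0.le
        _ = c ^ (n+1) * dist p (g p) := by ring
  rw [← tendsto_add_atTop_iff_nat 1]
  rw [tendsto_iff_dist_tendsto_zero]
  apply squeeze_zero (fun n => dist_nonneg) key
  have := (tendsto_pow_atTop_nhds_zero_of_lt_one (le_of_lt hc0) hc1).mul_const (dist p (g p))
  simpa using this

lemma rot_iterate_coords (α : ℝ)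
    (f₂ : {p : ℝ × ℝ // p.1 ^ 2 + p.2 ^ 2 = 1} → {p : ℝ × ℝ // p.1 ^ 2 + p.2 ^ 2 = 1})
    (hf₂ : ∀ p : {p : ℝ × ℝ // p.1 ^ 2 + p.2 ^ 2 = 1},
      ((f₂ p : ℝ × ℝ)) = ((p : ℝ × ℝ).1 * Real.cos α - (p : ℝ × ℝ).2 * Real.sin α,
                          (p : ℝ × ℝ).1 * Real.sin α + (p : ℝ × ℝ).2 * Real.cos α))
    (n : ℕ) (p : {p : ℝ × ℝ // p.1 ^ 2 + p.2 ^ 2 = 1}) :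
    ((f₂^[n] p : ℝ × ℝ)) =
      ((p : ℝ × ℝ).1 * Real.cos (n * α) - (p : ℝ × ℝ).2 * Real.sin (n * α),
       (p : ℝ × ℝ).1 * Real.sin (n * α) + (p : ℝ × ℝ).2 * Real.cos (n * α)) := by
  induction n with
  | zero => simp
  | succ n ih =>
    rw [Function.iterate_succ_apply', hf₂, ih]
    have h1 : ((n : ℝ) + 1) * α = n * α + α := by ring
    push_cast
    rw [h1, Real.cos_add, Real.sin_add]
    simp only [Prod.mk.injEq]
    constructor <;> ring

lemma rot_no_periodic (α : ℝ) (hα : Irrational (α / Real.pi))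
    (f₂ : {p : ℝ × ℝ // p.1 ^ 2 + p.2 ^ 2 = 1} → {p : ℝ × ℝ // p.1 ^ 2 + p.2 ^ 2 = 1})
    (hf₂ : ∀ p : {p : ℝ × ℝ // p.1 ^ 2 + p.2 ^ 2 = 1},
      ((f₂ p : ℝ × ℝ)) = ((p : ℝ × ℝ).1 * Real.cos α - (p : ℝ × ℝ).2 * Real.sin α,
                          (p : ℝ × ℝ).1 * Real.sin α + (p : ℝ × ℝ).2 * Real.cos α)) :
    ∀ n, 1 ≤ n → ∀ p, f₂^[n] p ≠ p := by
  intro n hn p h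
  have hc := rot_iterate_coords α f₂ hf₂ n p
  rw [h] at hc
  have hp := p.2
  have h1 : (p : ℝ × ℝ).1 = (p : ℝ × ℝ).1 * Real.cos (n * α) - (p : ℝ × ℝ).2 * Real.sin (n * α) :=
    congrArg Prod.fst hc
  have h2 : (p : ℝ × ℝ).2 = (p : ℝ × ℝ).1 * Real.sin (n * α) + (p : ℝ × ℝ).2 * Real.cos (n * α) :=
    congrArg Prod.snd hc
  have hcos : Real.cos ((n : ℝ) * α) = 1 := by
    linear_combination (-(p : ℝ × ℝ).1) * h1 - (p : ℝ × ℝ).2 * h2 +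
      (1 - Real.cos ((n : ℝ) * α)) * hp
  obtain ⟨k, hk⟩ := (Real.cos_eq_one_iff _).1 hcos
  have hπ : Real.pi ≠ 0 := Real.pi_ne_zero
  have hn0 : (n : ℝ) ≠ 0 := Nat.cast_ne_zero.2 (by omega)
  apply hα
  refine ⟨(2 * k / n : ℚ), ?_⟩
  push_cast
  field_simp
  linear_combination hk

/-- **No equivalent metric makes `{id, irrational rotation}` a Nadler contraction.**
Let `X` be the unit circle, `α` with `α/π` irrational, and `f₂` the rotation by `α`.
For the multivalued map `F p = {p, f₂ p}` there is no metric on `X` inducing the circle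
topology for which `F` is a Nadler `c`-contraction (`0 < c < 1`) w.r.t. the associated
Hausdorff metric. -/
theorem no_equivalent_metric_nadler_contraction
    (α : ℝ) (hα : Irrational (α / Real.pi))
    (f₂ : {p : ℝ × ℝ // p.1 ^ 2 + p.2 ^ 2 = 1} → {p : ℝ × ℝ // p.1 ^ 2 + p.2 ^ 2 = 1})
    (hf₂ : ∀ p : {p : ℝ × ℝ // p.1 ^ 2 + p.2 ^ 2 = 1},
      ((f₂ p : ℝ × ℝ)) = ((p : ℝ × ℝ).1 * Real.cos α - (p : ℝ × ℝ).2 * Real.sin α,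
                          (p : ℝ × ℝ).1 * Real.sin α + (p : ℝ × ℝ).2 * Real.cos α)) :
    ¬ ∃ (m : MetricSpace {p : ℝ × ℝ // p.1 ^ 2 + p.2 ^ 2 = 1}) (c : ℝ),
        0 < c ∧ c < 1 ∧
        m.toUniformSpace.toTopologicalSpace =
          (inferInstance : TopologicalSpace {p : ℝ × ℝ // p.1 ^ 2 + p.2 ^ 2 = 1}) ∧
        ∀ p q : {p : ℝ × ℝ // p.1 ^ 2 + p.2 ^ 2 = 1},
          @Metric.hausdorffDist _ m.toPseudoMetricSpace {p, f₂ p} {q, f₂ q} ≤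
            c * @dist _ m.toDist p q := by
  rintro ⟨m, c, hc0, hc1, htop, hF⟩
  have hfix := rot_no_periodic α hα f₂ hf₂
  let p₀ : {p : ℝ × ℝ // p.1 ^ 2 + p.2 ^ 2 = 1} := ⟨(1, 0), by norm_num⟩
  have htd : Filter.Tendsto (fun n => f₂^[n] p₀) atTop
      (@nhds _ m.toUniformSpace.toTopologicalSpace p₀) :=
    @nadler_tendsto _ m f₂ c hc0 hc1 hfix hF p₀
  rw [htop] at htd
  have h1 : Tendsto (fun n => ((f₂^[n] p₀ : {p : ℝ × ℝ // p.1 ^ 2 + p.2 ^ 2 = 1}) : ℝ × ℝ)) atTop (nhds (p₀ : ℝ × ℝ)) :=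
    ((continuous_subtype_val.tendsto _).comp htd)
  have h2 : Tendsto (fun n => ((f₂^[n+1] p₀ : {p : ℝ × ℝ // p.1 ^ 2 + p.2 ^ 2 = 1}) : ℝ × ℝ)) atTop (nhds (p₀ : ℝ × ℝ)) :=
    h1.comp (tendsto_add_atTop_nat 1)
  have hR : Continuous (fun q : ℝ × ℝ =>
      (q.1 * Real.cos α - q.2 * Real.sin α, q.1 * Real.sin α + q.2 * Real.cos α)) := by
    fun_prop
  have h3 : Tendsto (fun n => ((f₂^[n+1] p₀ : {p : ℝ × ℝ // p.1 ^ 2 + p.2 ^ 2 = 1}) : ℝ × ℝ)) atTop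
      (nhds ((p₀ : ℝ × ℝ).1 * Real.cos α - (p₀ : ℝ × ℝ).2 * Real.sin α,
             (p₀ : ℝ × ℝ).1 * Real.sin α + (p₀ : ℝ × ℝ).2 * Real.cos α)) := by
    have := (hR.tendsto _).comp h1
    simpa only [Function.comp_def, Function.iterate_succ_apply', hf₂] using this
  have heq := tendsto_nhds_unique h3 h2
  have hfp : f₂ p₀ = p₀ := Subtype.ext (by rw [hf₂ p₀, heq])
  exact hfix 1 le_rfl p₀ (by simpa using hfp)
end

section
/- Let α be a real number with α/π irrational and let R : ℝ² → ℝ² be the rotation about the origin by angle α. Define the operator F on nonempty compact subsets of ℝ² by F(A) = A ∪ R(A). Then F possesses no strict attractor: there is no nonempty compact set A* ⊆ ℝ² and open set U ⊆ ℝ² with A* ⊆ U such that d_H(Fⁿ(S), A*) → 0 as n → ∞ for every nonempty compact S ⊆ U. -/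
open Filter Metric Set Topology

/-!
Every map `F(T) = T ∪ R(T)` keeps a set inside any `R`-invariant set, and a rotation leaves
each circle `‖x‖ = r` invariant. Hence the iterates of a singleton `{p}` stay on the circle
through `p`, so a strict attractor would lie on the circle through every point of the open set
`U`; then `U` is contained in a single circle, which has empty interior.
-/

section IterateUnionImage

variable {α : Type*} (f : α → α)

theorem subset_iterate_union_image (S : Set α) (n : ℕ) :
    S ⊆ (fun T => T ∪ f '' T)^[n] S := by
  induction n with
  | zero => exact subset_rfl
  | succ n ih =>
    rw [Function.iterate_succ_apply']
    exact ih.trans subset_union_left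

theorem iterate_union_image_subset {K S : Set α} (hf : MapsTo f K K) (hS : S ⊆ K) (n : ℕ) :
    (fun T => T ∪ f '' T)^[n] S ⊆ K := by
  induction n with
  | zero => exact hS
  | succ n ih =>
    rw [Function.iterate_succ_apply']
    exact union_subset ih ((hf.mono_left ih).image_subset)

end IterateUnionImage

theorem IsClosed.subset_of_tendsto_hausdorffDist {X ι : Type*} [MetricSpace X] {l : Filter ι}
    [l.NeBot] {K A : Set X} {S : ι → Set X} (hK : IsClosed K) (hKb : Bornology.IsBounded K)
    (hSK : ∀ i, S i ⊆ K) (hS : ∀ i, (S i).Nonempty) (hA : Bornology.IsBounded A)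
    (h : Tendsto (fun i => hausdorffDist (S i) A) l (𝓝 0)) : A ⊆ K := by
  intro x hx
  have hdist : ∀ i, infDist x K ≤ hausdorffDist (S i) A := fun i =>
    calc infDist x K ≤ infDist x (S i) := infDist_le_infDist_of_subset (hSK i) (hS i)
      _ ≤ hausdorffDist A (S i) :=
        infDist_le_hausdorffDist_of_mem hx <|
          hausdorffEDist_ne_top_of_nonempty_of_bounded ⟨x, hx⟩ (hS i) hA (hKb.subset (hSK i))
      _ = hausdorffDist (S i) A := hausdorffDist_comm
  have hKne : K.Nonempty := (hS l.nonempty_of_neBot.some).mono (hSK _)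
  exact (hK.mem_iff_infDist_zero hKne).2 <|
    le_antisymm (ge_of_tendsto' h hdist) infDist_nonneg

theorem EuclideanSpace.norm_eq_of_rotation {α : ℝ} {p q : EuclideanSpace ℝ (Fin 2)}
    (hq : q 0 = p 0 * Real.cos α - p 1 * Real.sin α ∧
      q 1 = p 0 * Real.sin α + p 1 * Real.cos α) : ‖q‖ = ‖p‖ := by
  simp only [EuclideanSpace.norm_eq, Fin.sum_univ_two, Real.norm_eq_abs, sq_abs, hq.1, hq.2]
  congr 1
  linear_combination (p 0 ^ 2 + p 1 ^ 2) * Real.sin_sq_add_cos_sq α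

theorem rotation_union_no_strict_attractor_general
    (α : ℝ)
    (R : EuclideanSpace ℝ (Fin 2) → EuclideanSpace ℝ (Fin 2))
    (hR : ∀ p : EuclideanSpace ℝ (Fin 2),
      R p 0 = p 0 * Real.cos α - p 1 * Real.sin α ∧
      R p 1 = p 0 * Real.sin α + p 1 * Real.cos α) :
    ¬ ∃ (A : Set (EuclideanSpace ℝ (Fin 2))) (U : Set (EuclideanSpace ℝ (Fin 2))),
        A.Nonempty ∧ IsCompact A ∧ IsOpen U ∧ A ⊆ U ∧
        ∀ S : Set (EuclideanSpace ℝ (Fin 2)), S.Nonempty → IsCompact S → S ⊆ U →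
          Tendsto (fun n => Metric.hausdorffDist ((fun T => T ∪ R '' T)^[n] S) A)
            atTop (nhds 0) := by
  rintro ⟨A, U, ⟨x, hx⟩, hA, hU, hAU, hconv⟩
  have hR_sphere (r : ℝ) : MapsTo R (sphere 0 r) (sphere 0 r) := fun p hp => by
    simpa [EuclideanSpace.norm_eq_of_rotation (hR p)] using hp
  have hA_sphere (p) (hp : p ∈ U) : A ⊆ sphere 0 ‖p‖ :=
    isClosed_sphere.subset_of_tendsto_hausdorffDist isBounded_sphere
      (iterate_union_image_subset R (hR_sphere _) (by simp))
      (fun n => (singleton_nonempty p).mono (subset_iterate_union_image R _ n)) hA.isBounded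
      (hconv {p} (singleton_nonempty p) isCompact_singleton (singleton_subset_iff.2 hp))
  have hU_sphere : U ⊆ sphere 0 ‖x‖ := fun p hp => by
    simpa [eq_comm] using hA_sphere p hp hx
  simpa using interior_maximal hU_sphere hU (hAU hx)

/-- **The IFS `{id, irrational rotation}` of the plane has no strict attractor.**
Let `R` be the rotation of the Euclidean plane about the origin by an angle `α` with
`α/π` irrational, and let `F(A) = A ∪ R(A)` on nonempty compact subsets. Then there is no
nonempty compact `A*` and open `U ⊇ A*` such that `d_H(Fⁿ(S), A*) → 0` for every
nonempty compact `S ⊆ U`. -/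
theorem rotation_union_no_strict_attractor
    (α : ℝ) (hα : Irrational (α / Real.pi))
    (R : EuclideanSpace ℝ (Fin 2) → EuclideanSpace ℝ (Fin 2))
    (hR : ∀ p : EuclideanSpace ℝ (Fin 2),
      R p 0 = p 0 * Real.cos α - p 1 * Real.sin α ∧
      R p 1 = p 0 * Real.sin α + p 1 * Real.cos α) :
    ¬ ∃ (A : Set (EuclideanSpace ℝ (Fin 2))) (U : Set (EuclideanSpace ℝ (Fin 2))),
        A.Nonempty ∧ IsCompact A ∧ IsOpen U ∧ A ⊆ U ∧
        ∀ S : Set (EuclideanSpace ℝ (Fin 2)), S.Nonempty → IsCompact S → S ⊆ U →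
          Tendsto (fun n => Metric.hausdorffDist ((fun T => T ∪ R '' T)^[n] S) A)
            atTop (nhds 0) :=
  rotation_union_no_strict_attractor_general α R hR
end
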